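/- arXiv:2409.01863 — 8 statements merged into one kernel-verified Lean document; each statement's English description precedes it below -/
import Mathlib

section
/- Let F be a field of characteristic zero and consider the field F(x) with derivation d/dx. A rational function r ∈ F(x) is a logarithmic derivative, i.e. r = h'/h for some nonzero h ∈ F(x), only if r has no poles of order greater than one and all residues of r at its poles are integers. -/
open Polynomial

/-- A logarithmic derivative `r = h'/h` in `F(x)` (with `'` the derivation over `F`
sending `X` to `1`) has no poles of order greater than one, and all its residues
(the value of `(X - a) * r` at `a`) are integers. -/
theorem log_derivative_simple_poles_integer_residues
    (F : Type*) [Field F] [CharZero F]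
    (d : Derivation F (RatFunc F) (RatFunc F)) (hd : d RatFunc.X = 1)
    (r h : RatFunc F) (hh : h ≠ 0) (hr : r = d h / h) :
    ∀ a : F,
      Polynomial.rootMultiplicity a r.denom ≤ 1 ∧
      ∃ n : ℤ, RatFunc.eval (RingHom.id F) a ((RatFunc.X - RatFunc.C a) * r) = (n : F) := by
  classical
  -- `d` kills constants
  have hC0 : ∀ c : F, d (RatFunc.C c) = 0 := by
    intro c
    rw [← RatFunc.algebraMap_eq_C]
    exact d.map_algebraMap c
  -- `d` acts on polynomials as the usual derivative
  have dAlg : ∀ p : F[X], d (algebraMap F[X] (RatFunc F) p)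
      = algebraMap F[X] (RatFunc F) (derivative p) := by
    intro p
    induction p using Polynomial.induction_on with
    | C c => simp [RatFunc.algebraMap_C, hC0]
    | add p q hp hq => simp [hp, hq]
    | monomial n c ih =>
        rw [map_mul, map_pow, RatFunc.algebraMap_C, RatFunc.algebraMap_X,
          Derivation.leibniz, Derivation.leibniz_pow, hd, hC0]
        simp only [smul_eq_mul, mul_one, smul_zero, add_zero, Nat.add_sub_cancel,
          nsmul_eq_mul]
        rw [derivative_C_mul, derivative_X_pow]
        push_cast
        simp only [map_mul, map_pow, RatFunc.algebraMap_C, RatFunc.algebraMap_X,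
          Nat.add_sub_cancel, map_natCast, map_add, map_one]
        ring
  -- logarithmic derivative rules
  have Lmul : ∀ x y : RatFunc F, x ≠ 0 → y ≠ 0 →
      d (x * y) / (x * y) = d x / x + d y / y := by
    intro x y hx hy
    rw [Derivation.leibniz]
    simp only [smul_eq_mul]
    field_simp
    ring
  have Linv : ∀ y : RatFunc F, y ≠ 0 → d y⁻¹ / y⁻¹ = -(d y / y) := by
    intro y hy
    rw [Derivation.leibniz_inv]
    simp only [smul_eq_mul]
    field_simp
  have Ldiv : ∀ x y : RatFunc F, x ≠ 0 → y ≠ 0 →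
      d (x / y) / (x / y) = d x / x - d y / y := by
    intro x y hx hy
    rw [div_eq_mul_inv x y, Lmul x y⁻¹ hx (inv_ne_zero hy), Linv y hy]
    ring
  have Lpow : ∀ (x : RatFunc F) (m : ℕ), x ≠ 0 →
      d (x ^ m) / x ^ m = (m : RatFunc F) * (d x / x) := by
    intro x m hx
    rw [Derivation.leibniz_pow]
    simp only [smul_eq_mul, nsmul_eq_mul]
    cases m with
    | zero => simp
    | succ k =>
        rw [Nat.add_sub_cancel, pow_succ]
        field_simp
  intro a
  -- the linear factor
  obtain ⟨T, hTdef⟩ : ∃ T : F[X], T = Polynomial.X - Polynomial.C a := ⟨_, rfl⟩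
  have hT0 : T ≠ 0 := hTdef ▸ X_sub_C_ne_zero a
  obtain ⟨t, htdef⟩ : ∃ t : RatFunc F, t = algebraMap F[X] (RatFunc F) T := ⟨_, rfl⟩
  have ht0 : t ≠ 0 := htdef ▸ RatFunc.algebraMap_ne_zero hT0
  have hdt : d t = 1 := by
    rw [htdef, dAlg]
    simp [hTdef]
  -- decompose numerator and denominator of h
  obtain ⟨u, hu, hu'⟩ :=
    (h.num).exists_eq_pow_rootMultiplicity_mul_and_not_dvd (RatFunc.num_ne_zero hh) a
  obtain ⟨v, hv, hv'⟩ :=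
    (h.denom).exists_eq_pow_rootMultiplicity_mul_and_not_dvd (h.denom_ne_zero) a
  rw [← hTdef] at hu hv
  generalize hm1 : rootMultiplicity a h.num = m₁ at hu
  generalize hm2 : rootMultiplicity a h.denom = m₂ at hv
  have hua : u.eval a ≠ 0 := fun H => hu' (dvd_iff_isRoot.mpr H)
  have hva : v.eval a ≠ 0 := fun H => hv' (dvd_iff_isRoot.mpr H)
  have hu0 : u ≠ 0 := fun H => hua (by simp [H])
  have hv0 : v ≠ 0 := fun H => hva (by simp [H])
  obtain ⟨U, hUdef⟩ : ∃ U : RatFunc F, U = algebraMap F[X] (RatFunc F) u := ⟨_, rfl⟩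
  obtain ⟨V, hVdef⟩ : ∃ V : RatFunc F, V = algebraMap F[X] (RatFunc F) v := ⟨_, rfl⟩
  have hU0 : U ≠ 0 := hUdef ▸ RatFunc.algebraMap_ne_zero hu0
  have hV0 : V ≠ 0 := hVdef ▸ RatFunc.algebraMap_ne_zero hv0
  -- write h as a quotient
  have hh' : h = t ^ m₁ * U / (t ^ m₂ * V) := by
    conv_lhs => rw [← RatFunc.num_div_denom h]
    rw [hu, hv, map_mul, map_mul, map_pow, map_pow, ← htdef, ← hUdef, ← hVdef]
  -- main formula for r
  have hform : r = (m₁ : RatFunc F) * t⁻¹ - (m₂ : RatFunc F) * t⁻¹ + (d U / U - d V / V) := by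
    rw [hr, hh',
      Ldiv _ _ (mul_ne_zero (pow_ne_zero _ ht0) hU0) (mul_ne_zero (pow_ne_zero _ ht0) hV0),
      Lmul _ _ (pow_ne_zero _ ht0) hU0, Lmul _ _ (pow_ne_zero _ ht0) hV0,
      Lpow _ _ ht0, Lpow _ _ ht0, hdt]
    ring
  -- the regular part, as a quotient of polynomials
  obtain ⟨A, hAdef⟩ : ∃ A : F[X], A = derivative u * v - u * derivative v := ⟨_, rfl⟩
  obtain ⟨w, hwdef⟩ : ∃ w : F[X], w = u * v := ⟨_, rfl⟩
  have hwa : w.eval a ≠ 0 := by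
    rw [hwdef, eval_mul]
    exact mul_ne_zero hua hva
  have hw0 : w ≠ 0 := fun H => hwa (by simp [H])
  have hW0 : algebraMap F[X] (RatFunc F) w ≠ 0 := RatFunc.algebraMap_ne_zero hw0
  have hs : d U / U - d V / V = algebraMap F[X] (RatFunc F) A / algebraMap F[X] (RatFunc F) w := by
    rw [hUdef, hVdef, dAlg, dAlg, div_sub_div _ _ (hUdef ▸ hU0) (hVdef ▸ hV0),
      ← map_mul, ← map_mul, ← map_mul, ← map_sub, ← hAdef, ← hwdef]
  obtain ⟨n, hndef⟩ : ∃ n : ℤ, n = (m₁ : ℤ) - (m₂ : ℤ) := ⟨_, rfl⟩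
  -- r as a quotient of polynomials
  have hrq : r = algebraMap F[X] (RatFunc F) ((n : F[X]) * w + T * A)
      / algebraMap F[X] (RatFunc F) (T * w) := by
    rw [hform, hs, map_add, map_mul, map_mul, map_mul, map_intCast, ← htdef, hndef]
    push_cast
    field_simp
  constructor
  · -- at most a simple pole
    have hdvd : r.denom ∣ T * w := by
      rw [hrq]
      exact RatFunc.denom_div_dvd _ _
    have hTw0 : T * w ≠ 0 := mul_ne_zero hT0 hw0
    have h1 : rootMultiplicity a (T * w) = 1 := by
      rw [rootMultiplicity_mul hTw0, hTdef, rootMultiplicity_X_sub_C_self,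
        rootMultiplicity_eq_zero hwa]
    rw [← h1]
    exact (le_rootMultiplicity_iff hTw0).2 ((pow_rootMultiplicity_dvd r.denom a).trans hdvd)
  · refine ⟨n, ?_⟩
    have hXC : RatFunc.X - RatFunc.C a = t := by
      rw [htdef, hTdef, map_sub, RatFunc.algebraMap_X, RatFunc.algebraMap_C]
    have hres : (RatFunc.X - RatFunc.C a) * r = (n : RatFunc F)
        + algebraMap F[X] (RatFunc F) T * (algebraMap F[X] (RatFunc F) A
          / algebraMap F[X] (RatFunc F) w) := by
      rw [hXC, hrq, map_add, map_mul, map_mul, map_mul, map_intCast, ← htdef]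
      field_simp
    rw [hres]
    have hdenn : Polynomial.eval₂ (RingHom.id F) a (RatFunc.denom ((n : RatFunc F))) ≠ 0 := by
      rw [← map_intCast (algebraMap F[X] (RatFunc F)) n, RatFunc.denom_algebraMap]
      simp
    have hdenT : Polynomial.eval₂ (RingHom.id F) a
        (RatFunc.denom (algebraMap F[X] (RatFunc F) T)) ≠ 0 := by
      rw [RatFunc.denom_algebraMap]
      simp
    have hdenAw : Polynomial.eval₂ (RingHom.id F) a
        (RatFunc.denom (algebraMap F[X] (RatFunc F) A / algebraMap F[X] (RatFunc F) w)) ≠ 0 := by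
      intro H
      have h2 : Polynomial.eval₂ (RingHom.id F) a w = 0 :=
        Polynomial.eval₂_eq_zero_of_dvd_of_eval₂_eq_zero _ _ (RatFunc.denom_div_dvd A w) H
      exact hwa h2
    have hdenTAw : Polynomial.eval₂ (RingHom.id F) a
        (RatFunc.denom (algebraMap F[X] (RatFunc F) T
          * (algebraMap F[X] (RatFunc F) A / algebraMap F[X] (RatFunc F) w))) ≠ 0 := by
      intro H
      have h2 := Polynomial.eval₂_eq_zero_of_dvd_of_eval₂_eq_zero (RingHom.id F) a
        (RatFunc.denom_mul_dvd _ _) H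
      rw [Polynomial.eval₂_mul] at h2
      rcases mul_eq_zero.mp h2 with h' | h'
      · exact hdenT h'
      · exact hdenAw h'
    rw [RatFunc.eval_add _ _ hdenn hdenTAw, RatFunc.eval_mul _ _ hdenT hdenAw]
    have h1 : RatFunc.eval (RingHom.id F) a ((n : RatFunc F)) = (n : F) := by
      rw [← map_intCast (RatFunc.C (K := F)) n, RatFunc.eval_C]
      simp
    have h2 : RatFunc.eval (RingHom.id F) a (algebraMap F[X] (RatFunc F) T) = 0 := by
      rw [RatFunc.eval_algebraMap]
      simp [hTdef]
    rw [h1, h2, zero_mul, add_zero]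
end

section
/- Let F be a field of characteristic zero, μ ∈ F, and N a nonzero integer. Then there is no rational function a ∈ F(x) with a ≠ 0 satisfying a'/a = −Nμ/x − N, where ' denotes d/dx. -/
/-!
Write `a = p / q` with polynomials `p, q`. The logarithmic derivative of `a` is
`W(q, p) / (p q)`, where `W(q, p) = q p' - q' p` is the Wronskian, so the equation becomes the
polynomial identity `x W(q, p) = -N (x + μ) p q`. Differentiation lowers the degree, so
`deg W(q, p) < deg p + deg q` and the left side has degree at most `deg p + deg q`, while the
right side has degree exactly one more.
-/

open Polynomial

namespace Polynomial

variable {R : Type*} [CommRing R] [IsDomain R]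

theorem X_mul_wronskian_ne_mul {p q r : R[X]} (hp : p ≠ 0) (hq : q ≠ 0)
    (hr : 0 < r.natDegree) : X * wronskian q p ≠ r * (p * q) := by
  intro h
  have hr0 : r ≠ 0 := ne_zero_of_natDegree_gt hr
  have hrhs : (r * (p * q)).natDegree = r.natDegree + (p.natDegree + q.natDegree) := by
    rw [natDegree_mul hr0 (mul_ne_zero hp hq), natDegree_mul hp hq]
  by_cases hw : wronskian q p = 0
  · rw [hw, mul_zero, eq_comm] at h
    exact mul_ne_zero hr0 (mul_ne_zero hp hq) h
  · have hlt := natDegree_wronskian_lt_add hw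
    have hdeg := congrArg natDegree h
    rw [hrhs, natDegree_X_mul hw] at hdeg
    omega

end Polynomial

namespace RatFunc

variable {K : Type*} [CommRing K] [IsDomain K] {d : Derivation K (RatFunc K) (RatFunc K)}

theorem derivation_algebraMap (hd : d X = 1) (p : K[X]) :
    d (algebraMap K[X] (RatFunc K) p) = algebraMap K[X] (RatFunc K) (derivative p) := by
  rw [← aeval_X_left_eq_algebraMap, Derivation.map_aeval, hd, smul_eq_mul, mul_one,
    aeval_X_left_eq_algebraMap]

theorem derivation_div_div_eq_wronskian (hd : d X = 1) {p q : K[X]} (hp : p ≠ 0)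
    (hq : q ≠ 0) :
    d (algebraMap K[X] (RatFunc K) p / algebraMap K[X] (RatFunc K) q) /
        (algebraMap K[X] (RatFunc K) p / algebraMap K[X] (RatFunc K) q) =
      algebraMap K[X] (RatFunc K) (wronskian q p) / algebraMap K[X] (RatFunc K) (p * q) := by
  have hp' := algebraMap_ne_zero hp
  have hq' := algebraMap_ne_zero hq
  rw [Derivation.leibniz_div, derivation_algebraMap hd, derivation_algebraMap hd, wronskian,
    map_mul, map_sub, map_mul, map_mul]
  simp only [smul_eq_mul]
  field_simp

end RatFunc

/-- For `N` a nonzero integer and `μ ∈ F`, there is no nonzero rational function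
`a ∈ F(x)` with `a'/a = -Nμ/x - N`. -/
theorem no_rational_solution_log_deriv
    (F : Type*) [Field F] [CharZero F]
    (d : Derivation F (RatFunc F) (RatFunc F)) (hd : d RatFunc.X = 1)
    (μ : F) (N : ℤ) (hN : N ≠ 0) :
    ¬ ∃ a : RatFunc F, a ≠ 0 ∧
      d a / a = -(N : RatFunc F) * RatFunc.C μ / RatFunc.X - (N : RatFunc F) := by
  rintro ⟨a, ha, heq⟩
  have hp : a.num ≠ 0 := RatFunc.num_ne_zero ha
  have hq : a.denom ≠ 0 := a.denom_ne_zero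
  have hN' : -(N : F) ≠ 0 := neg_ne_zero.mpr (Int.cast_ne_zero.mpr hN)
  rw [← RatFunc.num_div_denom a, RatFunc.derivation_div_div_eq_wronskian hd hp hq,
    div_eq_iff (RatFunc.algebraMap_ne_zero (mul_ne_zero hp hq))] at heq
  refine X_mul_wronskian_ne_mul hp hq (r := C (-(N : F)) * X + C (-(N : F) * μ))
    (by rw [natDegree_linear hN']; exact one_pos) (RatFunc.algebraMap_injective F ?_)
  rw [map_mul, heq]
  simp only [map_mul, map_add, map_neg, map_intCast, RatFunc.algebraMap_X, RatFunc.algebraMap_C]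
  field_simp [RatFunc.X_ne_zero]
  ring
end

section
/- Let F be a field of characteristic zero, λ ∈ F, μ ∈ F, and N a nonzero integer. Then there is no nonzero a ∈ F(x) with a'/a = (λ − Nμ)/x − N; equivalently, the equation x a' = ((λ − Nμ) − N x) a has no nonzero solution a ∈ F(x). -/
open Polynomial

lemma deriv_algebraMap_ratfunc (F : Type*) [Field F]
    (d : Derivation F (RatFunc F) (RatFunc F)) (hd : d RatFunc.X = 1) (p : F[X]) :
    d (algebraMap F[X] (RatFunc F) p) = algebraMap F[X] (RatFunc F) (derivative p) := by
  have h : d.compAlgebraMap F[X] = Polynomial.mkDerivation F (1 : RatFunc F) := by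
    apply Polynomial.derivation_ext
    simp [Polynomial.mkDerivation_X, RatFunc.algebraMap_X, hd]
  have := DFunLike.congr_fun h p
  simp only [Derivation.compAlgebraMap_apply, IsScalarTower.coe_toAlgHom',
    Polynomial.mkDerivation_apply, Algebra.smul_def, mul_one] at this
  simpa using this

/-- For `λ, μ ∈ F` and `N` a nonzero integer, the equation
`x a' = ((λ - Nμ) - N x) a` (i.e. `a'/a = (λ - Nμ)/x - N`) has no nonzero
rational solution. -/
theorem no_rational_solution_log_deriv_with_constant_at_infinity
    (F : Type*) [Field F] [CharZero F]
    (d : Derivation F (RatFunc F) (RatFunc F)) (hd : d RatFunc.X = 1)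
    (l μ : F) (N : ℤ) (hN : N ≠ 0) :
    ¬ ∃ a : RatFunc F, a ≠ 0 ∧
      RatFunc.X * d a =
        (RatFunc.C l - (N : RatFunc F) * RatFunc.C μ - (N : RatFunc F) * RatFunc.X) * a := by
  rintro ⟨a, ha0, heq⟩
  set p := a.num with hp
  set q := a.denom with hq
  have hq0 : q ≠ 0 := a.denom_ne_zero
  have hp0 : p ≠ 0 := RatFunc.num_ne_zero ha0
  have hQ0 : (algebraMap F[X] (RatFunc F)) q ≠ 0 := RatFunc.algebraMap_ne_zero hq0
  have haq : a * (algebraMap F[X] (RatFunc F)) q = (algebraMap F[X] (RatFunc F)) p := by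
    conv_lhs => rw [← RatFunc.num_div_denom a]
    exact div_mul_cancel₀ _ hQ0
  -- differentiate haq
  have hda : d a * (algebraMap F[X] (RatFunc F)) q + a * (algebraMap F[X] (RatFunc F)) (derivative q) = (algebraMap F[X] (RatFunc F)) (derivative p) := by
    have := congrArg d haq
    rw [d.leibniz, deriv_algebraMap_ratfunc F d hd,
      deriv_algebraMap_ratfunc F d hd, smul_eq_mul, smul_eq_mul] at this
    linear_combination this
  set r : F[X] := Polynomial.C l - (N : F[X]) * Polynomial.C μ - (N : F[X]) * Polynomial.X
    with hr
  have hrphi : (RatFunc.C l - (N : RatFunc F) * RatFunc.C μ - (N : RatFunc F) * RatFunc.X)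
      = (algebraMap F[X] (RatFunc F)) r := by
    simp [hr, map_sub, map_mul, RatFunc.algebraMap_C, RatFunc.algebraMap_X]
  -- key polynomial identity
  have hkey : Polynomial.X * (derivative p * q - p * derivative q) = r * (p * q) := by
    apply IsFractionRing.injective F[X] (RatFunc F)
    have h1 : RatFunc.X * d a * ((algebraMap F[X] (RatFunc F)) q * (algebraMap F[X] (RatFunc F)) q) = (algebraMap F[X] (RatFunc F)) r * ((algebraMap F[X] (RatFunc F)) p * (algebraMap F[X] (RatFunc F)) q) := by
      rw [← hrphi]
      linear_combination ((algebraMap F[X] (RatFunc F)) q * (algebraMap F[X] (RatFunc F)) q) * heq +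
        ((RatFunc.C l - (N : RatFunc F) * RatFunc.C μ - (N : RatFunc F) * RatFunc.X) * (algebraMap F[X] (RatFunc F)) q) * haq
    have h2 : d a * (algebraMap F[X] (RatFunc F)) q = (algebraMap F[X] (RatFunc F)) (derivative p) - a * (algebraMap F[X] (RatFunc F)) (derivative q) := by
      linear_combination hda
    simp only [map_mul, map_sub, RatFunc.algebraMap_X]
    linear_combination h1 - (RatFunc.X * (algebraMap F[X] (RatFunc F)) q) * h2 + (RatFunc.X * (algebraMap F[X] (RatFunc F)) (derivative q)) * haq
  -- degree contradiction
  have hNF : ((N : F) : F) ≠ 0 := by exact_mod_cast hN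
  have hrdeg : r.degree = 1 := by
    have : r = Polynomial.C (-(N : F)) * Polynomial.X + Polynomial.C (l - (N : F) * μ) := by
      rw [hr, show ((N : ℤ) : F[X]) = Polynomial.C ((N : ℤ) : F) by simp]
      simp only [map_neg, map_sub, map_mul]
      ring
    rw [this]
    exact Polynomial.degree_linear (neg_ne_zero.mpr hNF)
  have hlt : (Polynomial.X * (derivative p * q - p * derivative q)).degree
      < (r * (p * q)).degree := by
    have hr0 : r ≠ 0 := fun h => by simp [h] at hrdeg
    rw [Polynomial.degree_mul, Polynomial.degree_mul, hrdeg, Polynomial.degree_X,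
      Polynomial.degree_mul]
    have h1 : (derivative p * q - p * derivative q).degree < p.degree + q.degree := by
      apply lt_of_le_of_lt (Polynomial.degree_sub_le _ _)
      apply max_lt
      · rw [Polynomial.degree_mul]
        exact WithBot.add_lt_add_right (Polynomial.degree_ne_bot.mpr hq0)
          (Polynomial.degree_derivative_lt hp0)
      · rw [Polynomial.degree_mul]
        exact WithBot.add_lt_add_left (Polynomial.degree_ne_bot.mpr hp0)
          (Polynomial.degree_derivative_lt hq0)
    exact WithBot.add_lt_add_left (by simp) h1
  rw [hkey] at hlt
  exact lt_irrefl _ hlt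
end

section
/- Let F be an algebraically closed field of characteristic zero, μ ∈ F nonzero, λ a positive integer with λ/μ ∈ ℤ, and α ∈ F. If the equation μ·x·b' + (x + 1 − λ)·b + (αλ/μ)·x^{λ/μ} = 0 with α ≠ 0 has a solution b ∈ F(x), then 1/μ is a natural number. -/
open Polynomial

theorem aux_deriv_algebraMap {F : Type*} [Field F]
    (d : Derivation F (RatFunc F) (RatFunc F)) (hd : d RatFunc.X = 1) (p : F[X]) :
    d (algebraMap F[X] (RatFunc F) p) = algebraMap F[X] (RatFunc F) (derivative p) := by
  induction p using Polynomial.induction_on with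
  | C a =>
      rw [derivative_C, map_zero, RatFunc.algebraMap_C, ← RatFunc.algebraMap_eq_C]
      exact d.map_algebraMap a
  | add p q hp hq => rw [map_add, map_add, hp, hq, derivative_add, map_add]
  | monomial n a ih =>
      have : derivative (C a * X ^ (n + 1)) = derivative (C a * X ^ n) * X + C a * X ^ n := by
        rw [pow_succ, ← mul_assoc, derivative_mul, derivative_X, mul_one]
      rw [this, pow_succ, ← mul_assoc, map_mul, d.leibniz, smul_eq_mul, smul_eq_mul, ih]
      simp only [map_add, map_mul, map_pow, RatFunc.algebraMap_X, hd]
      ring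

/-- If a monic polynomial divides `X^T * q'`, it is a power of `X`. -/
theorem aux_pow_X {F : Type*} [Field F] [CharZero F] [IsAlgClosed F]
    {q : F[X]} (hq0 : q ≠ 0) (hqm : q.Monic) {T : ℕ}
    (hdvd : q ∣ X ^ T * derivative q) : ∃ n : ℕ, q = X ^ n := by
  have hroot : ∀ a : F, q.IsRoot a → a = 0 := by
    intro a ha
    by_contra h0
    have hqd : q.natDegree ≠ 0 := by
      intro h
      rw [Polynomial.eq_C_of_natDegree_eq_zero h] at ha
      exact hq0 (by
        rw [Polynomial.eq_C_of_natDegree_eq_zero h]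
        simpa [Polynomial.IsRoot] using ha)
    have hq' : derivative q ≠ 0 := fun h => hqd (natDegree_eq_zero_of_derivative_eq_zero h)
    have hXT : (X : F[X]) ^ T * derivative q ≠ 0 :=
      mul_ne_zero (pow_ne_zero _ X_ne_zero) hq'
    obtain ⟨g, hg⟩ := hdvd
    have hgne : g ≠ 0 := by
      intro h; rw [h, mul_zero] at hg; exact hXT hg
    have h1 : rootMultiplicity a (X ^ T * derivative q)
        = rootMultiplicity a q + rootMultiplicity a g := by
      rw [hg, rootMultiplicity_mul (by rw [← hg]; exact hXT)]
    have h2 : rootMultiplicity a (X ^ T * derivative q)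
        = rootMultiplicity a q - 1 := by
      rw [rootMultiplicity_mul hXT, derivative_rootMultiplicity_of_root ha]
      have : rootMultiplicity a ((X : F[X]) ^ T) = 0 := by
        apply rootMultiplicity_eq_zero
        simp [Polynomial.IsRoot, pow_ne_zero, h0]
      omega
    have h3 : 0 < rootMultiplicity a q := (rootMultiplicity_pos hq0).2 ha
    omega
  obtain ⟨g, hq_eq, hnd⟩ := q.exists_eq_pow_rootMultiplicity_mul_and_not_dvd hq0 0
  simp only [map_zero, sub_zero] at hq_eq hnd
  have hgroots : ∀ a : F, ¬ g.IsRoot a := by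
    intro a ha
    have : q.IsRoot a := by
      rw [hq_eq]; simp [Polynomial.IsRoot.def] at ha ⊢; right; exact ha
    have ha0 : a = 0 := hroot a this
    have hdvd' := Polynomial.dvd_iff_isRoot.2 ha
    rw [ha0, map_zero, sub_zero] at hdvd'
    exact hnd hdvd'
  have hg0 : g ≠ 0 := fun h => hnd (h ▸ dvd_zero X)
  have hgC : g.natDegree = 0 := by
    by_contra h
    have hdeg : g.degree ≠ 0 := by
      rw [Polynomial.degree_eq_natDegree hg0]
      exact_mod_cast h
    obtain ⟨a, ha⟩ := IsAlgClosed.exists_root g hdeg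
    exact hgroots a ha
  have hg1 : g = 1 := by
    have := (Polynomial.eq_C_of_natDegree_eq_zero hgC)
    have hlc : q.leadingCoeff = g.coeff 0 := by
      rw [hq_eq, this]
      simp [Polynomial.leadingCoeff_mul, Polynomial.leadingCoeff_pow]
    rw [this, ← hlc, hqm.leadingCoeff, map_one]
  exact ⟨_, by rw [hq_eq, hg1, mul_one]⟩

theorem aux_E2 {F : Type*} [Field F] (p : F[X]) (μ c e : F) (t u n : ℕ)
    (E1 : C μ * X ^ (t+1) * (derivative p * X ^ n - p * (C (n:F) * X ^ (n-1)))
      + X ^ t * (X + 1 - C e) * (p * X ^ n) + C c * X ^ u * (X ^ n) ^ 2 = 0) :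
    C μ * (derivative p * X ^ (t+2)) + (X + C (1 - e - μ*n)) * p * X ^ (t+1)
      + C c * X ^ (u+n+1) = 0 := by
  have hXn : (X : F[X]) ^ n ≠ 0 := pow_ne_zero _ X_ne_zero
  apply mul_left_cancel₀ hXn
  rw [mul_zero]
  have key : (X : F[X]) ^ n * (C μ * (derivative p * X ^ (t+2))
      + (X + C (1 - e - μ*n)) * p * X ^ (t+1) + C c * X ^ (u+n+1))
      = X * (C μ * X ^ (t+1) * (derivative p * X ^ n - p * (C (n:F) * X ^ (n-1)))
      + X ^ t * (X + 1 - C e) * (p * X ^ n) + C c * X ^ u * (X ^ n) ^ 2) := by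
    cases n with
    | zero =>
        simp only [Nat.cast_zero, map_zero, pow_zero, map_sub, map_one, map_mul, mul_zero,
          Nat.zero_eq]
        push_cast
        ring
    | succ m =>
        simp only [Nat.add_sub_cancel, map_sub, map_one, map_mul, map_natCast]
        push_cast
        ring
  rw [key, E1, mul_zero]




/-- Over an algebraically closed field `F` of characteristic zero, with `μ ≠ 0`,
`λ` a positive integer with `λ/μ = k ∈ ℤ` and `α ≠ 0`, if the equation
`μ x b' + (x + 1 - λ) b + (αλ/μ) x^(λ/μ) = 0` has a rational solution then
`1/μ` is a natural number. -/
theorem rational_solution_forces_inv_mu_nat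
    (F : Type*) [Field F] [CharZero F] [IsAlgClosed F]
    (d : Derivation F (RatFunc F) (RatFunc F)) (hd : d RatFunc.X = 1)
    (μ : F) (hμ : μ ≠ 0) (l : ℕ) (hl : 0 < l)
    (k : ℤ) (hk : (k : F) = (l : F) / μ)
    (α : F) (hα : α ≠ 0)
    (hsol : ∃ b : RatFunc F,
      RatFunc.C μ * RatFunc.X * d b + (RatFunc.X + 1 - (l : RatFunc F)) * b
        + RatFunc.C (α * l / μ) * RatFunc.X ^ k = 0) :
    ∃ n : ℕ, (n : F) = 1 / μ := by
  obtain ⟨b, hb⟩ := hsol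
  set φ := algebraMap F[X] (RatFunc F) with hφ
  set c : F := α * l / μ with hcdef
  have hc0 : c ≠ 0 := by
    apply div_ne_zero _ hμ
    exact mul_ne_zero hα (Nat.cast_ne_zero.2 hl.ne')
  have hμk : μ * (k : F) = (l : F) := by
    rw [hk]; field_simp
  set p : F[X] := b.num with hpdef
  set q : F[X] := b.denom with hqdef
  have hq0 : q ≠ 0 := b.denom_ne_zero
  have hφq : φ q ≠ 0 := RatFunc.algebraMap_ne_zero hq0
  have hbq : b * φ q = φ p := by
    conv_lhs => rw [← RatFunc.num_div_denom b]
    rw [div_mul_cancel₀ _ hφq]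
  have hdb : d b * φ q ^ 2 = φ (derivative p) * φ q - φ p * φ (derivative q) := by
    have h1 := congrArg d hbq
    rw [d.leibniz, smul_eq_mul, smul_eq_mul, aux_deriv_algebraMap d hd,
      aux_deriv_algebraMap d hd] at h1
    rw [← hφ] at h1
    linear_combination φ q * h1 - φ (derivative q) * hbq
  set t : ℕ := k.natAbs with htdef
  set u : ℕ := (t + k).toNat with hudef
  have hu : (u : ℤ) = t + k := by
    rw [hudef, Int.toNat_of_nonneg]
    rw [htdef]
    omega
  have hXne : (RatFunc.X : RatFunc F) ≠ 0 := RatFunc.X_ne_zero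
  have hXk : (RatFunc.X : RatFunc F) ^ (t : ℕ) * RatFunc.X ^ k = RatFunc.X ^ (u : ℕ) := by
    rw [← zpow_natCast (RatFunc.X : RatFunc F) t, ← zpow_natCast (RatFunc.X : RatFunc F) u,
      ← zpow_add₀ hXne, hu]
  have hb2 : RatFunc.C μ * RatFunc.X * d b * RatFunc.X ^ t
      + (RatFunc.X + 1 - (l : RatFunc F)) * b * RatFunc.X ^ t
      + RatFunc.C c * RatFunc.X ^ u = 0 := by
    rw [← hXk]
    linear_combination RatFunc.X ^ t * hb
  have E1 : C μ * X ^ (t+1) * (derivative p * q - p * derivative q)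
      + X ^ t * (X + 1 - (l : F[X])) * (p * q) + C c * X ^ u * q ^ 2 = 0 := by
    rw [hφ] at hdb hbq
    apply IsFractionRing.injective F[X] (RatFunc F)
    rw [map_zero]
    simp only [map_add, map_mul, map_sub, map_pow, map_one, map_natCast,
      RatFunc.algebraMap_X, RatFunc.algebraMap_C]
    linear_combination (algebraMap F[X] (RatFunc F) q) ^ 2 * hb2
      - RatFunc.C μ * RatFunc.X ^ (t+1) * hdb
      - ((RatFunc.X + 1 - (l : RatFunc F)) * RatFunc.X ^ t * algebraMap F[X] (RatFunc F) q) * hbq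
  -- q divides X^(t+1) * q'
  have hdvdq : q ∣ X ^ (t+1) * derivative q := by
    have h1 : C μ * (X ^ (t+1) * (p * derivative q))
        = C μ * X ^ (t+1) * (derivative p * q) + X ^ t * (X + 1 - (l : F[X])) * (p * q)
          + C c * X ^ u * q ^ 2 := by linear_combination -E1
    have h2 : q ∣ C μ * (X ^ (t+1) * (p * derivative q)) := by
      rw [h1]
      refine dvd_add (dvd_add ?_ ?_) ?_
      · exact Dvd.dvd.mul_left (dvd_mul_left q (derivative p)) _
      · exact Dvd.dvd.mul_left (dvd_mul_left q p) _
      · exact Dvd.dvd.mul_left (dvd_pow_self q two_ne_zero) _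
    have h3 : q ∣ X ^ (t+1) * (p * derivative q) := by
      have heq : X ^ (t+1) * (p * derivative q)
          = C μ⁻¹ * (C μ * (X ^ (t+1) * (p * derivative q))) := by
        conv_rhs => rw [← mul_assoc]
        rw [← C_mul, inv_mul_cancel₀ hμ, C_1, one_mul]
      rw [heq]
      exact Dvd.dvd.mul_left h2 _
    have hcop : IsCoprime q p := (RatFunc.isCoprime_num_denom b).symm
    refine hcop.dvd_of_dvd_mul_left ?_
    have heq2 : p * (X ^ (t+1) * derivative q) = X ^ (t+1) * (p * derivative q) := by ring
    rw [heq2]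
    exact h3
  obtain ⟨n, hqX⟩ := aux_pow_X hq0 (b.monic_denom) hdvdq
  rw [hqX, derivative_X_pow, ← Polynomial.C_eq_natCast] at E1
  have E2 := aux_E2 p μ c (l : F) t u n E1
  set a : F := 1 - (l : F) - μ * n with hadef
  have hco : ∀ j : ℕ, (if t+2 ≤ j then μ * (derivative p).coeff (j-(t+2)) else 0)
      + (if t+1 ≤ j then ((X + C a) * p).coeff (j-(t+1)) else 0)
      + (if j = u+n+1 then c else 0) = 0 := by
    intro j
    have h := congrArg (fun r => Polynomial.coeff r j) E2
    simp only [coeff_add, coeff_C_mul, coeff_mul_X_pow', coeff_C, mul_ite, mul_one,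
      mul_zero, coeff_zero] at h
    have e : (if u+n+1 ≤ j then (if j - (u+n+1) = 0 then c else 0) else 0)
        = (if j = u+n+1 then c else 0) := by
      split_ifs <;> first | rfl | (exfalso; omega)
    rw [e] at h
    exact h
  have hR : ∀ i : ℕ, μ * (p.coeff (i+1) * ((i : F)+1))
      + (p.coeff i + a * p.coeff (i+1)) + (if i+t+2 = u+n+1 then c else 0) = 0 := by
    intro i
    have h := hco (i+t+2)
    rw [if_pos (by omega : t+2 ≤ i+t+2), if_pos (by omega : t+1 ≤ i+t+2)] at h
    have e1 : i+t+2 - (t+2) = i := by omega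
    have e2 : i+t+2 - (t+1) = i+1 := by omega
    rw [e1, e2, coeff_derivative, add_mul, coeff_add, coeff_X_mul, coeff_C_mul] at h
    exact_mod_cast h
  have hRlow : a * p.coeff 0 + (if t+1 = u+n+1 then c else 0) = 0 := by
    have h := hco (t+1)
    rw [if_neg (by omega), if_pos (le_refl _), Nat.sub_self, add_mul, coeff_add,
      mul_coeff_zero, coeff_X_zero, zero_mul, coeff_C_mul] at h
    simpa using h
  have hp0 : p ≠ 0 := by
    intro hp
    have h := hco (u+n+1)
    simp only [hp, derivative_zero, coeff_zero, mul_zero, ite_self, zero_add, add_zero,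
      if_pos rfl] at h
    exact hc0 h
  by_cases hcase : u+n+1 ≤ t
  · exfalso
    have h := hco (u+n+1)
    rw [if_neg (by omega), if_neg (by omega), if_pos rfl] at h
    simp only [mul_zero, zero_add] at h
    exact hc0 h
  by_cases hcase2 : u+n+1 = t+1
  · exfalso
    have h := hR p.natDegree
    rw [if_neg (by omega), coeff_eq_zero_of_natDegree_lt (Nat.lt_succ_self _)] at h
    simp only [mul_zero, zero_mul, add_zero, zero_add, mul_zero] at h
    exact (Polynomial.leadingCoeff_ne_zero.mpr hp0) h
  -- main case
  have hts : t+2 ≤ u+n+1 := by omega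
  have hNw : p.natDegree + t + 2 = u+n+1 := by
    by_contra hne
    have h := hR p.natDegree
    rw [if_neg hne, coeff_eq_zero_of_natDegree_lt (Nat.lt_succ_self _)] at h
    simp only [mul_zero, zero_mul, add_zero, zero_add, mul_zero] at h
    exact (Polynomial.leadingCoeff_ne_zero.mpr hp0) h
  have hmN : p.natTrailingDegree ≤ p.natDegree := p.natTrailingDegree_le_natDegree
  have hptc : p.coeff p.natTrailingDegree ≠ 0 :=
    Polynomial.coeff_natTrailingDegree_ne_zero.mpr hp0
  have ham : μ * (p.natTrailingDegree : F) + a = 0 := by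
    rcases Nat.eq_zero_or_pos p.natTrailingDegree with hm0 | hmpos
    · have h := hRlow
      rw [if_neg (by omega), add_zero] at h
      have hp00 : p.coeff 0 ≠ 0 := by rw [← hm0]; exact hptc
      have ha0 : a = 0 := by
        rcases mul_eq_zero.mp h with h' | h'
        · exact h'
        · exact absurd h' hp00
      rw [hm0, ha0]
      simp
    · have h := hR (p.natTrailingDegree - 1)
      have hif : ¬(p.natTrailingDegree - 1 + t + 2 = u + n + 1) := by omega
      have e3 : p.natTrailingDegree - 1 + 1 = p.natTrailingDegree := by omega
      rw [e3, coeff_eq_zero_of_lt_natTrailingDegree (show p.natTrailingDegree - 1 < p.natTrailingDegree by omega), if_neg hif] at h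
      have h2 : (μ * (((p.natTrailingDegree - 1 : ℕ) : F) + 1) + a)
          * p.coeff p.natTrailingDegree = 0 := by linear_combination h
      have h3 : μ * (((p.natTrailingDegree - 1 : ℕ) : F) + 1) + a = 0 := by
        rcases mul_eq_zero.mp h2 with h' | h'
        · exact h'
        · exact absurd h' hptc
      have h4 : ((p.natTrailingDegree - 1 : ℕ) : F) + 1 = (p.natTrailingDegree : F) := by
        rw [Nat.cast_sub hmpos]
        push_cast
        ring
      rwa [h4] at h3
  refine ⟨p.natDegree + 1 - p.natTrailingDegree, ?_⟩
  rw [eq_div_iff hμ]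
  have hcast : ((p.natDegree + 1 - p.natTrailingDegree : ℕ) : F)
      = (p.natDegree : F) + 1 - (p.natTrailingDegree : F) := by
    rw [Nat.cast_sub (by omega)]
    push_cast
    ring
  rw [hcast]
  have hNF : (p.natDegree : F) + t + 2 = (u : F) + n + 1 := by exact_mod_cast congrArg (Nat.cast : ℕ → F) hNw
  have huF : (u : F) = (t : F) + (k : F) := by exact_mod_cast congrArg (Int.cast : ℤ → F) hu
  rw [hadef] at ham
  linear_combination μ * hNF + μ * huF - ham + hμk
end

section
/- Let F be a field of characteristic zero, f ∈ F(x) a rational function, λ ∈ F with λ ≠ 0, and let h ∈ F(x₁,x₂) satisfy (∂h/∂x₁)·x₂ + (∂h/∂x₂)·x₂·f(x₁) = λ·h with h ≠ 0. Then f is constant, i.e. f ∈ F. -/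
/-- The image of the variable `xᵢ` in the rational function field `F(x₁,x₂)`. -/
noncomputable def Xv (F : Type*) [Field F] (i : Fin 2) :
    FractionRing (MvPolynomial (Fin 2) F) :=
  algebraMap (MvPolynomial (Fin 2) F) (FractionRing (MvPolynomial (Fin 2) F)) (MvPolynomial.X i)

/-!
Write `h = A / B` with `A, B ∈ F[x₁][x₂]` and `f = p / q`. The eigenvalue equation becomes the
polynomial identity `q x₂ (∂₁A·B - A·∂₁B) + p x₂ (∂₂A·B - A·∂₂B) = λ q A B`. Compare the
coefficients of `x₂ ^ (n + m)`, where `n`, `m` are the `x₂`-adic orders of `A` and `B`: the terms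
with `x₂ ∂₁` only start in degree `n + m + 1`, while `x₂ ∂₂` multiplies the lowest term of `A` by
`n`. Hence `(n - m) p = λ q`, so `n ≠ m` and `f = λ / (n - m)`.
-/

open Polynomial

namespace Polynomial

section Semiring

variable {R : Type*} [CommSemiring R]

theorem coeff_X_mul_derivative (u : R[X]) (i : ℕ) :
    (X * derivative u).coeff i = i * u.coeff i := by
  cases i with
  | zero => simp
  | succ j => rw [coeff_X_mul, coeff_derivative]; push_cast; ring

theorem coeff_mul_add_of_X_pow_dvd {u v : R[X]} {s t : ℕ} (hu : X ^ s ∣ u) (hv : X ^ t ∣ v) :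
    (u * v).coeff (s + t) = u.coeff s * v.coeff t := by
  obtain ⟨u, rfl⟩ := hu
  obtain ⟨v, rfl⟩ := hv
  rw [show X ^ s * u * (X ^ t * v) = X ^ (s + t) * (u * v) by ring, coeff_X_pow_mul',
    coeff_X_pow_mul', coeff_X_pow_mul', if_pos le_rfl, if_pos le_rfl, if_pos le_rfl]
  simp [mul_coeff_zero]

theorem coeff_mul_eq_zero_of_X_pow_dvd {u v : R[X]} {s t k : ℕ} (hu : X ^ s ∣ u)
    (hv : X ^ t ∣ v) (hk : k < s + t) : (u * v).coeff k = 0 :=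
  X_pow_dvd_iff.mp (pow_add (X : R[X]) s t ▸ mul_dvd_mul hu hv) k hk

theorem X_pow_natTrailingDegree_dvd (u : R[X]) : X ^ u.natTrailingDegree ∣ u :=
  X_pow_dvd_iff.mpr fun _ => coeff_eq_zero_of_lt_natTrailingDegree

theorem X_pow_natTrailingDegree_dvd_X_mul_derivative (u : R[X]) :
    X ^ u.natTrailingDegree ∣ X * derivative u :=
  X_pow_dvd_iff.mpr fun _ hi => by
    rw [coeff_X_mul_derivative, coeff_eq_zero_of_lt_natTrailingDegree hi, mul_zero]

end Semiring

section Ring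

variable {R : Type*} [CommRing R]

theorem X_pow_natTrailingDegree_dvd_mapCoeffs {A : Type*} [CommRing A] [Algebra R A]
    (d : Derivation R A A) (u : A[X]) :
    X ^ u.natTrailingDegree ∣ PolynomialModule.equivPolynomialSelf (d.mapCoeffs u) :=
  X_pow_dvd_iff.mpr fun _ hi => by
    change d (u.coeff _) = 0
    rw [coeff_eq_zero_of_lt_natTrailingDegree hi, map_zero]

theorem natTrailingDegree_sub_mul_eq [IsDomain R] {a b a₁ b₁ : R[X]} {p q c : R}
    (ha : a ≠ 0) (hb : b ≠ 0) (ha₁ : X ^ a.natTrailingDegree ∣ a₁)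
    (hb₁ : X ^ b.natTrailingDegree ∣ b₁)
    (key : C q * (X * a₁ * b - a * (X * b₁)) + C p * (X * derivative a * b - a * (X * derivative b))
      = C c * (a * b)) :
    ((a.natTrailingDegree : R) - b.natTrailingDegree) * p = c := by
  set n := a.natTrailingDegree
  set m := b.natTrailingDegree
  have hXa := X_pow_natTrailingDegree_dvd a
  have hXb := X_pow_natTrailingDegree_dvd b
  have hXa₁ : X ^ (n + 1) ∣ X * a₁ := pow_succ' (X : R[X]) n ▸ mul_dvd_mul_left X ha₁
  have hXb₁ : X ^ (m + 1) ∣ X * b₁ := pow_succ' (X : R[X]) m ▸ mul_dvd_mul_left X hb₁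
  have hco := congrArg (coeff · (n + m)) key
  simp only [coeff_add, coeff_sub, coeff_C_mul] at hco
  rw [coeff_mul_eq_zero_of_X_pow_dvd hXa₁ hXb (by omega),
    coeff_mul_eq_zero_of_X_pow_dvd hXa hXb₁ (by omega),
    coeff_mul_add_of_X_pow_dvd (X_pow_natTrailingDegree_dvd_X_mul_derivative a) hXb,
    coeff_mul_add_of_X_pow_dvd hXa (X_pow_natTrailingDegree_dvd_X_mul_derivative b),
    coeff_mul_add_of_X_pow_dvd hXa hXb, coeff_X_mul_derivative, coeff_X_mul_derivative] at hco
  have hlead : a.coeff n * b.coeff m ≠ 0 :=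
    mul_ne_zero (mt trailingCoeff_eq_zero.mp ha) (mt trailingCoeff_eq_zero.mp hb)
  exact mul_right_cancel₀ hlead (by linear_combination hco)

end Ring

end Polynomial

theorem Derivation.apply_algebraMap_eq_pderiv {R σ K : Type*} [CommSemiring R] [CommSemiring K]
    [Algebra R K] [Algebra (MvPolynomial σ R) K] [IsScalarTower R (MvPolynomial σ R) K]
    [DecidableEq σ] (d : Derivation R K K) (i : σ)
    (hd : ∀ j, d (algebraMap (MvPolynomial σ R) K (MvPolynomial.X j)) = if j = i then 1 else 0)
    (z : MvPolynomial σ R) :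
    d (algebraMap _ K z) = algebraMap _ K (MvPolynomial.pderiv i z) := by
  have := MvPolynomial.derivation_ext (D₁ := d.compAlgebraMap (MvPolynomial σ R))
    (D₂ := (Algebra.linearMap (MvPolynomial σ R) K).compDer (MvPolynomial.pderiv i)) fun j => by
      rcases eq_or_ne j i with rfl | hji <;> simp [MvPolynomial.pderiv_X, *]
  exact DFunLike.congr_fun this z

theorem Derivation.mul_sub_mul_eq_of_apply_div {R K : Type*} [CommRing R] [Field K]
    [Algebra R K] (D : Derivation R K K) {u v c : K} (hv : v ≠ 0) (h : D (u / v) = c * (u / v)) :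
    v * D u - u * D v = c * u * v := by
  rw [Derivation.leibniz_div, smul_eq_mul, smul_eq_mul, smul_eq_mul] at h
  field_simp at h
  linear_combination h

theorem RatFunc.exists_eq_C_of_C_mul_num_eq {F : Type*} [Field F] {f : RatFunc F} {k l : F}
    (hl : l ≠ 0) (h : Polynomial.C k * f.num = Polynomial.C l * f.denom) :
    ∃ c, f = RatFunc.C c := by
  have hk : k ≠ 0 := by
    rintro rfl
    simpa [hl, f.denom_ne_zero] using h.symm
  refine ⟨l / k, ?_⟩
  rw [← f.num_div_denom, div_eq_iff (RatFunc.algebraMap_ne_zero f.denom_ne_zero),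
    ← RatFunc.algebraMap_C, ← map_mul]
  congr 1
  apply mul_left_cancel₀ (C_ne_zero.mpr hk)
  rw [h, ← mul_assoc, ← C_mul, mul_div_cancel₀ _ hk]

section Bivariate

open scoped Polynomial.Bivariate

variable {F : Type*} [Field F]

variable (F) in
noncomputable def bivariateToFractionRing : F[X][Y] →+* FractionRing (MvPolynomial (Fin 2) F) :=
  (algebraMap _ _).comp (Bivariate.equivMvPolynomial F : F[X][Y] →+* MvPolynomial (Fin 2) F)

theorem bivariateToFractionRing_injective : Function.Injective (bivariateToFractionRing F) :=
  (IsFractionRing.injective _ _).comp (Bivariate.equivMvPolynomial F).injective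

@[simp]
theorem bivariateToFractionRing_C_C (c : F) :
    bivariateToFractionRing F (C (C c)) = algebraMap F _ c := by
  simp [bivariateToFractionRing, IsScalarTower.algebraMap_apply F (MvPolynomial (Fin 2) F)]

@[simp]
theorem bivariateToFractionRing_C_X : bivariateToFractionRing F (C X) = Xv F 0 := by
  simp [bivariateToFractionRing, Xv]

@[simp]
theorem bivariateToFractionRing_Y : bivariateToFractionRing F Y = Xv F 1 := by
  simp [bivariateToFractionRing, Xv]

theorem exists_eq_bivariateToFractionRing_div (z : FractionRing (MvPolynomial (Fin 2) F)) :
    ∃ a b : F[X][Y], b ≠ 0 ∧ z = bivariateToFractionRing F a / bivariateToFractionRing F b := by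
  obtain ⟨A, B, hB, rfl⟩ := IsFractionRing.div_surjective (A := MvPolynomial (Fin 2) F) z
  refine ⟨(Bivariate.equivMvPolynomial F).symm A, (Bivariate.equivMvPolynomial F).symm B,
    by simpa using nonZeroDivisors.ne_zero hB, ?_⟩
  simp [bivariateToFractionRing]

variable (d : Derivation F (FractionRing (MvPolynomial (Fin 2) F))
  (FractionRing (MvPolynomial (Fin 2) F)))

theorem Derivation.apply_bivariateToFractionRing_eq_mapCoeffs (h0 : d (Xv F 0) = 1)
    (h1 : d (Xv F 1) = 0) (u : F[X][Y]) :
    d (bivariateToFractionRing F u) = bivariateToFractionRing F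
      (PolynomialModule.equivPolynomialSelf (derivative'.mapCoeffs u)) := by
  change d (algebraMap _ _ (Bivariate.equivMvPolynomial F u)) =
    algebraMap _ _ (Bivariate.equivMvPolynomial F _)
  rw [d.apply_algebraMap_eq_pderiv 0 (by simpa [Fin.forall_fin_two] using ⟨h0, h1⟩),
    Bivariate.pderiv_zero_equivMvPolynomial]

theorem Derivation.apply_bivariateToFractionRing_eq_derivative (h0 : d (Xv F 0) = 0)
    (h1 : d (Xv F 1) = 1) (u : F[X][Y]) :
    d (bivariateToFractionRing F u) = bivariateToFractionRing F (derivative u) := by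
  change d (algebraMap _ _ (Bivariate.equivMvPolynomial F u)) =
    algebraMap _ _ (Bivariate.equivMvPolynomial F _)
  rw [d.apply_algebraMap_eq_pderiv 1 (by simpa [Fin.forall_fin_two] using ⟨h0, h1⟩),
    Bivariate.pderiv_one_equivMvPolynomial]

theorem RingHom.apply_algebraMap_eq_bivariateToFractionRing
    (ι : RatFunc F →+* FractionRing (MvPolynomial (Fin 2) F))
    (hιC : ∀ c : F, ι (RatFunc.C c) = algebraMap F _ c) (hιX : ι RatFunc.X = Xv F 0) (P : F[X]) :
    ι (algebraMap F[X] (RatFunc F) P) = bivariateToFractionRing F (C P) := by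
  change (ι.comp (algebraMap F[X] (RatFunc F))) P = ((bivariateToFractionRing F).comp C) P
  congr 1
  ext c
  · simp [hιC]
  · simp [hιX]

end Bivariate

theorem poizat_darboux_forces_f_constant_general
    (F : Type*) [Field F]
    (d1 d2 : Derivation F (FractionRing (MvPolynomial (Fin 2) F))
      (FractionRing (MvPolynomial (Fin 2) F)))
    (hd11 : d1 (Xv F 0) = 1) (hd12 : d1 (Xv F 1) = 0)
    (hd21 : d2 (Xv F 0) = 0) (hd22 : d2 (Xv F 1) = 1)
    (ι : RatFunc F →+* FractionRing (MvPolynomial (Fin 2) F))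
    (hιC : ∀ c : F, ι (RatFunc.C c) = algebraMap F _ c)
    (hιX : ι RatFunc.X = Xv F 0)
    (f : RatFunc F) (l : F) (hl : l ≠ 0)
    (h : FractionRing (MvPolynomial (Fin 2) F)) (hh : h ≠ 0)
    (heq : d1 h * Xv F 1 + d2 h * (Xv F 1 * ι f) = algebraMap F _ l * h) :
    ∃ c : F, f = RatFunc.C c := by
  set j := bivariateToFractionRing F
  obtain ⟨a, b, hb, rfl⟩ := exists_eq_bivariateToFractionRing_div h
  have ha : a ≠ 0 := by rintro rfl; simp at hh
  have hD1 := d1.apply_bivariateToFractionRing_eq_mapCoeffs hd11 hd12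
  have hD2 := d2.apply_bivariateToFractionRing_eq_derivative hd21 hd22
  have hιf : ι f * j (C f.denom) = j (C f.num) := by
    rw [← ι.apply_algebraMap_eq_bivariateToFractionRing hιC hιX,
      ← ι.apply_algebraMap_eq_bivariateToFractionRing hιC hιX, ← map_mul,
      ← (eq_div_iff (RatFunc.algebraMap_ne_zero f.denom_ne_zero)).mp f.num_div_denom.symm]
  set D := Xv F 1 • d1 + (Xv F 1 * ι f) • d2
  have hquot := D.mul_sub_mul_eq_of_apply_div
    ((map_ne_zero_iff _ bivariateToFractionRing_injective).mpr hb)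
    (by simpa [D, mul_comm] using heq)
  have key : C f.denom * (X * PolynomialModule.equivPolynomialSelf (derivative'.mapCoeffs a) * b
        - a * (X * PolynomialModule.equivPolynomialSelf (derivative'.mapCoeffs b)))
      + C f.num * (X * derivative a * b - a * (X * derivative b))
      = C (C l * f.denom) * (a * b) := by
    apply bivariateToFractionRing_injective
    simp only [D, Derivation.add_apply, Derivation.smul_apply, smul_eq_mul, hD1, hD2] at hquot
    simp only [map_add, map_sub, map_mul, bivariateToFractionRing_Y, bivariateToFractionRing_C_C]
    linear_combination j (C f.denom) * hquot
      - Xv F 1 * (j (derivative a) * j b - j a * j (derivative b)) * hιf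
  have horder := natTrailingDegree_sub_mul_eq ha hb (X_pow_natTrailingDegree_dvd_mapCoeffs _ a)
    (X_pow_natTrailingDegree_dvd_mapCoeffs _ b) key
  exact RatFunc.exists_eq_C_of_C_mul_num_eq (k := (a.natTrailingDegree : F) - b.natTrailingDegree)
    hl (by rwa [map_sub, map_natCast, map_natCast])

/-- If `h ∈ F(x₁,x₂)` is a nonzero solution of the Darboux eigenvalue equation
`(∂h/∂x₁)·x₂ + (∂h/∂x₂)·x₂·f(x₁) = λ·h` (with `λ ≠ 0`) for the vector field of
the Poizat equation `y'' = y' f(y)`, then `f` is constant. Here `ι` is the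
embedding of `F(x)` into `F(x₁,x₂)` sending `x` to `x₁`. -/
theorem poizat_darboux_forces_f_constant
    (F : Type*) [Field F] [CharZero F]
    (d1 d2 : Derivation F (FractionRing (MvPolynomial (Fin 2) F))
      (FractionRing (MvPolynomial (Fin 2) F)))
    (hd11 : d1 (Xv F 0) = 1) (hd12 : d1 (Xv F 1) = 0)
    (hd21 : d2 (Xv F 0) = 0) (hd22 : d2 (Xv F 1) = 1)
    (ι : RatFunc F →+* FractionRing (MvPolynomial (Fin 2) F))
    (hιC : ∀ c : F, ι (RatFunc.C c) = algebraMap F _ c)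
    (hιX : ι RatFunc.X = Xv F 0)
    (f : RatFunc F) (l : F) (hl : l ≠ 0)
    (h : FractionRing (MvPolynomial (Fin 2) F)) (hh : h ≠ 0)
    (heq : d1 h * Xv F 1 + d2 h * (Xv F 1 * ι f) = algebraMap F _ l * h) :
    ∃ c : F, f = RatFunc.C c :=
  poizat_darboux_forces_f_constant_general F d1 d2 hd11 hd12 hd21 hd22 ι hιC hιX f l hl h hh heq
end

section
/- Let F be a field of characteristic zero and f ∈ F(x). There is no h ∈ F(x₁,x₂) satisfying (∂h/∂x₁)·x₂ + (∂h/∂x₂)·x₂·f(x₁) = 1 unless f is constant. -/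
set_option maxHeartbeats 1000000
set_option synthInstance.maxHeartbeats 200000

open Polynomial

namespace PoizatAux
section Embed

variable (F : Type*) [Field F]

noncomputable def psi0 : Polynomial F →+* MvPolynomial (Fin 2) F :=
  Polynomial.eval₂RingHom MvPolynomial.C (MvPolynomial.X 0)

noncomputable def theta' : Polynomial (Polynomial F) →+* MvPolynomial (Fin 2) F :=
  Polynomial.eval₂RingHom (psi0 F) (MvPolynomial.X 1)

noncomputable def thetar : MvPolynomial (Fin 2) F →+* Polynomial (Polynomial F) :=
  MvPolynomial.eval₂Hom ((Polynomial.C).comp (Polynomial.C))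
    (fun i => if i = 0 then Polynomial.C Polynomial.X else Polynomial.X)

theorem theta'_thetar (P : MvPolynomial (Fin 2) F) : theta' F (thetar F P) = P := by
  have : (theta' F).comp (thetar F) = RingHom.id _ := by
    apply MvPolynomial.ringHom_ext
    · intro a; simp [theta', thetar, psi0]
    · intro i; fin_cases i <;> simp [theta', thetar, psi0]
  exact RingHom.congr_fun this P

theorem thetar_psi0 (a : Polynomial F) : thetar F (psi0 F a) = Polynomial.C a := by
  have : (thetar F).comp (psi0 F) = (Polynomial.C : Polynomial F →+* _) := by
    apply Polynomial.ringHom_ext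
    · intro c; simp [thetar, psi0]
    · simp [thetar, psi0]
  exact RingHom.congr_fun this a

theorem thetar_theta' (v : Polynomial (Polynomial F)) : thetar F (theta' F v) = v := by
  have : (thetar F).comp (theta' F) = RingHom.id _ := by
    apply Polynomial.ringHom_ext
    · intro a; simp [theta']
      simpa [theta'] using thetar_psi0 F a
    · simp [theta', thetar]
  exact RingHom.congr_fun this v

variable {F}

/-- The embedding `F(x₁)[x₂] → F(x₁,x₂)`. -/
noncomputable def jmap (ι : RatFunc F →+* FractionRing (MvPolynomial (Fin 2) F)) :
    Polynomial (RatFunc F) →+* FractionRing (MvPolynomial (Fin 2) F) :=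
  Polynomial.eval₂RingHom ι (Xv F 1)

theorem jmap_C (ι : RatFunc F →+* FractionRing (MvPolynomial (Fin 2) F)) (c : RatFunc F) :
    jmap ι (Polynomial.C c) = ι c := by simp [jmap]

theorem jmap_X (ι : RatFunc F →+* FractionRing (MvPolynomial (Fin 2) F)) :
    jmap ι Polynomial.X = Xv F 1 := by simp [jmap]

theorem jmap_monomial (ι : RatFunc F →+* FractionRing (MvPolynomial (Fin 2) F))
    (n : ℕ) (a : RatFunc F) :
    jmap ι (Polynomial.monomial n a) = ι a * (Xv F 1) ^ n := by
  simp [jmap, Polynomial.eval₂_monomial]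


variable (ι : RatFunc F →+* FractionRing (MvPolynomial (Fin 2) F))


variable (hιC : ∀ c : F, ι (RatFunc.C c) = algebraMap F _ c)
variable (hιX : ι RatFunc.X = Xv F 0)

include hιC hιX

theorem jmap_map (v : Polynomial (Polynomial F)) :
    jmap ι (v.map (algebraMap (Polynomial F) (RatFunc F))) =
      algebraMap (MvPolynomial (Fin 2) F) _ (theta' F v) := by
  have : (jmap ι).comp (Polynomial.mapRingHom (algebraMap (Polynomial F) (RatFunc F))) =
      (algebraMap (MvPolynomial (Fin 2) F) (FractionRing (MvPolynomial (Fin 2) F))).comp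
        (theta' F) := by
    apply Polynomial.ringHom_ext
    · intro a
      have : ∀ a : Polynomial F,
          ι (algebraMap (Polynomial F) (RatFunc F) a) =
            algebraMap (MvPolynomial (Fin 2) F) _ (psi0 F a) := by
        intro a
        have h2 : (ι.comp (algebraMap (Polynomial F) (RatFunc F))) =
            ((algebraMap (MvPolynomial (Fin 2) F)
              (FractionRing (MvPolynomial (Fin 2) F))).comp (psi0 F)) := by
          apply Polynomial.ringHom_ext
          · intro c
            simp only [RingHom.comp_apply, RatFunc.algebraMap_C, hιC, psi0,
              Polynomial.coe_eval₂RingHom, Polynomial.eval₂_C]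
            exact IsScalarTower.algebraMap_apply F _ _ c
          · simp only [RingHom.comp_apply, RatFunc.algebraMap_X, hιX, psi0, Xv,
              Polynomial.coe_eval₂RingHom, Polynomial.eval₂_X]
        exact RingHom.congr_fun h2 a
      simpa [jmap, theta'] using this a
    · simp [jmap, theta', Xv]
  exact RingHom.congr_fun this v

theorem jmap_thetar (P : MvPolynomial (Fin 2) F) :
    jmap ι ((thetar F P).map (algebraMap (Polynomial F) (RatFunc F))) =
      algebraMap (MvPolynomial (Fin 2) F) _ P := by
  rw [jmap_map ι hιC hιX, theta'_thetar]

theorem jmap_injective : Function.Injective (jmap ι) := by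
  rw [injective_iff_map_eq_zero]
  intro u hu
  obtain ⟨b, hb⟩ := IsLocalization.exist_integer_multiples
    (nonZeroDivisors (Polynomial F)) u.support u.coeff
  set φ := algebraMap (Polynomial F) (RatFunc F) with hφ
  have hcoeff : ∀ n : ℕ, (Polynomial.C (φ (b : Polynomial F)) * u).coeff n ∈ Set.range φ := by
    intro n
    rw [Polynomial.coeff_C_mul]
    by_cases hn : n ∈ u.support
    · obtain ⟨a, ha⟩ := hb n hn
      exact ⟨a, by rwa [Algebra.smul_def] at ha⟩
    · rw [Polynomial.notMem_support_iff.mp hn, mul_zero]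
      exact ⟨0, map_zero φ⟩
  have hl : Polynomial.C (φ (b : Polynomial F)) * u ∈ Polynomial.lifts φ :=
    (Polynomial.lifts_iff_coeff_lifts _).mpr hcoeff
  obtain ⟨v, hv⟩ := (Polynomial.mem_lifts _).mp hl
  have hjv : jmap ι (v.map φ) = 0 := by
    rw [hv, map_mul, hu, mul_zero]
  rw [jmap_map ι hιC hιX] at hjv
  have h0 : theta' F v = 0 := by
    exact (map_eq_zero_iff _ (IsFractionRing.injective _ _)).mp hjv
  have hv0 : v = 0 := by
    have := thetar_theta' F v
    rw [h0, map_zero] at this; exact this.symm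
  rw [hv0, Polynomial.map_zero] at hv
  have hb0 : φ (b : Polynomial F) ≠ 0 := by
    have : (b : Polynomial F) ≠ 0 := nonZeroDivisors.ne_zero b.2
    exact fun h => this ((map_eq_zero_iff _ (IsFractionRing.injective _ _)).mp h)
  have := mul_eq_zero.mp hv.symm
  rcases this with h | h
  · exact absurd h (by simpa using hb0)
  · exact h


variable {F : Type*} [Field F]

end Embed

variable {F : Type*} [Field F]

/-- Formal derivative on `F(x)`. -/
noncomputable def deltaRF (c : RatFunc F) : RatFunc F :=
  (algebraMap (Polynomial F) (RatFunc F) (Polynomial.derivative c.num)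
      * algebraMap (Polynomial F) (RatFunc F) c.denom
    - algebraMap (Polynomial F) (RatFunc F) c.num
      * algebraMap (Polynomial F) (RatFunc F) (Polynomial.derivative c.denom))
  / (algebraMap (Polynomial F) (RatFunc F) c.denom) ^ 2

theorem deltaRF_zero : deltaRF (0 : RatFunc F) = 0 := by
  simp [deltaRF]

theorem deltaRF_one : deltaRF (1 : RatFunc F) = 0 := by
  simp [deltaRF]

theorem D_iota_poly (ι : RatFunc F →+* FractionRing (MvPolynomial (Fin 2) F))
    (hιC : ∀ c : F, ι (RatFunc.C c) = algebraMap F _ c)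
    (hιX : ι RatFunc.X = Xv F 0)
    (D : Derivation F (FractionRing (MvPolynomial (Fin 2) F))
      (FractionRing (MvPolynomial (Fin 2) F)))
    (w : FractionRing (MvPolynomial (Fin 2) F)) (hD : D (Xv F 0) = w)
    (b : Polynomial F) :
    D (ι (algebraMap (Polynomial F) (RatFunc F) b)) =
      ι (algebraMap (Polynomial F) (RatFunc F) (Polynomial.derivative b)) * w := by
  induction b using Polynomial.induction_on' with
  | add p q hp hq => simp only [map_add, hp, hq, add_mul]
  | monomial n a =>
    rw [← Polynomial.C_mul_X_pow_eq_monomial, Polynomial.derivative_C_mul_X_pow]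
    simp only [map_mul, map_pow, RatFunc.algebraMap_C, RatFunc.algebraMap_X, hιC, hιX]
    rw [Derivation.leibniz, Derivation.map_algebraMap, Derivation.leibniz_pow, hD]
    simp only [smul_eq_mul, nsmul_eq_mul, smul_zero, add_zero, map_mul, map_natCast]
    ring

theorem D_iota (ι : RatFunc F →+* FractionRing (MvPolynomial (Fin 2) F))
    (hιC : ∀ c : F, ι (RatFunc.C c) = algebraMap F _ c)
    (hιX : ι RatFunc.X = Xv F 0)
    (D : Derivation F (FractionRing (MvPolynomial (Fin 2) F))
      (FractionRing (MvPolynomial (Fin 2) F)))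
    (w : FractionRing (MvPolynomial (Fin 2) F)) (hD : D (Xv F 0) = w)
    (c : RatFunc F) : D (ι c) = ι (deltaRF c) * w := by
  have hden : ι (algebraMap (Polynomial F) (RatFunc F) c.denom) ≠ 0 := by
    intro h
    exact RatFunc.denom_ne_zero c
      ((map_eq_zero_iff _ (IsFractionRing.injective _ _)).mp (ι.injective (by simpa using h)))
  have hc : ι c = ι (algebraMap (Polynomial F) (RatFunc F) c.num)
      / ι (algebraMap (Polynomial F) (RatFunc F) c.denom) := by
    rw [← map_div₀, RatFunc.num_div_denom]
  rw [hc, Derivation.leibniz_div, D_iota_poly ι hιC hιX D w hD,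
    D_iota_poly ι hιC hιX D w hD, deltaRF, map_div₀]
  simp only [smul_eq_mul, map_sub, map_mul, map_pow]
  field_simp

theorem deltaRF_add (ι : RatFunc F →+* FractionRing (MvPolynomial (Fin 2) F))
    (hιC : ∀ c : F, ι (RatFunc.C c) = algebraMap F _ c)
    (hιX : ι RatFunc.X = Xv F 0)
    (D : Derivation F (FractionRing (MvPolynomial (Fin 2) F))
      (FractionRing (MvPolynomial (Fin 2) F)))
    (hd11 : D (Xv F 0) = 1) (a b : RatFunc F) :
    deltaRF (a + b) = deltaRF a + deltaRF b := by
  apply ι.injective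
  have h1 := D_iota ι hιC hιX D 1 hd11 (a + b)
  have h2 := D_iota ι hιC hιX D 1 hd11 a
  have h3 := D_iota ι hιC hιX D 1 hd11 b
  rw [mul_one] at h1 h2 h3
  rw [map_add, ← h1, map_add, ← h2, ← h3, map_add]

/-- Coefficientwise derivative on `F(x₁)[x₂]`. -/
noncomputable def Dc : Polynomial (RatFunc F) → Polynomial (RatFunc F) := fun u =>
  u.sum fun n c => Polynomial.C (deltaRF c) * Polynomial.X ^ n

theorem Dc_coeff (u : Polynomial (RatFunc F)) (k : ℕ) :
    (Dc u).coeff k = deltaRF (u.coeff k) := by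
  rw [Dc, Polynomial.sum_def, Polynomial.finset_sum_coeff]
  simp only [Polynomial.coeff_C_mul, Polynomial.coeff_X_pow, mul_ite, mul_one, mul_zero]
  rw [Finset.sum_ite_eq u.support k (fun n => deltaRF (u.coeff n))]
  by_cases hk : k ∈ u.support
  · rw [if_pos hk]
  · rw [if_neg hk, Polynomial.notMem_support_iff.mp hk, deltaRF_zero]

theorem Dc_monomial (n : ℕ) (a : RatFunc F) :
    Dc (Polynomial.monomial n a) = Polynomial.C (deltaRF a) * Polynomial.X ^ n := by
  ext k
  rw [Dc_coeff, Polynomial.coeff_monomial, Polynomial.coeff_C_mul, Polynomial.coeff_X_pow]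
  by_cases hk : n = k
  · rw [if_pos hk, if_pos hk.symm, mul_one]
  · rw [if_neg hk, if_neg (fun h => hk h.symm), mul_zero, deltaRF_zero]

/-- The derivation `∂₁ + f·∂₂` on `F(x₁)[x₂]`. -/
noncomputable def Dop (f : RatFunc F) (u : Polynomial (RatFunc F)) : Polynomial (RatFunc F) :=
  Polynomial.derivative u * Polynomial.C f + Dc u

theorem Dop_coeff (f : RatFunc F) (u : Polynomial (RatFunc F)) (k : ℕ) :
    (Dop f u).coeff k = u.coeff (k + 1) * (k + 1) * f + deltaRF (u.coeff k) := by
  rw [Dop, Polynomial.coeff_add, Polynomial.coeff_mul_C, Dc_coeff, Polynomial.coeff_derivative]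

theorem Dop_degree_lt (f : RatFunc F) (q : Polynomial (RatFunc F)) (hq : q.Monic) :
    (Dop f q).degree < q.degree := by
  have hq0 : q ≠ 0 := hq.ne_zero
  rw [Polynomial.degree_eq_natDegree hq0, Polynomial.degree_lt_iff_coeff_zero]
  intro m hm
  have hm' : q.natDegree ≤ m := by exact_mod_cast hm
  rw [Dop_coeff]
  have h1 : q.coeff (m + 1) = 0 := Polynomial.coeff_eq_zero_of_natDegree_lt (by omega)
  have h2 : deltaRF (q.coeff m) = 0 := by
    rcases eq_or_lt_of_le hm' with h | h
    · rw [← h, hq.coeff_natDegree, deltaRF_one]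
    · rw [Polynomial.coeff_eq_zero_of_natDegree_lt h, deltaRF_zero]
  rw [h1, h2, zero_mul, zero_mul, zero_add]


section Main


variable (ι : RatFunc F →+* FractionRing (MvPolynomial (Fin 2) F))
variable (hιC : ∀ c : F, ι (RatFunc.C c) = algebraMap F _ c)
variable (hιX : ι RatFunc.X = Xv F 0)
variable (d1 d2 : Derivation F (FractionRing (MvPolynomial (Fin 2) F))
  (FractionRing (MvPolynomial (Fin 2) F)))
variable (hd11 : d1 (Xv F 0) = 1) (hd12 : d1 (Xv F 1) = 0)
variable (hd21 : d2 (Xv F 0) = 0) (hd22 : d2 (Xv F 1) = 1)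
variable (f : RatFunc F)

include hιC hιX hd11 in
theorem Dop_add (u v : Polynomial (RatFunc F)) :
    Dop f (u + v) = Dop f u + Dop f v := by
  have hDc : Dc (u + v) = Dc u + Dc v := by
    ext k
    rw [Polynomial.coeff_add, Dc_coeff, Dc_coeff, Dc_coeff, Polynomial.coeff_add,
      deltaRF_add ι hιC hιX d1 hd11]
  rw [Dop, Dop, Dop, Polynomial.derivative_add, hDc]
  ring

include hιC hιX hd11 hd12 hd21 hd22 in
theorem d_jmap (u : Polynomial (RatFunc F)) :
    d1 (jmap ι u) + ι f * d2 (jmap ι u) = jmap ι (Dop f u) := by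
  induction u using Polynomial.induction_on' with
  | add u v hu hv =>
    rw [Dop_add ι hιC hιX d1 hd11 f u v, map_add, map_add, map_add, map_add, ← hu, ← hv]
    ring
  | monomial n a =>
    have hR : jmap ι (Dop f (Polynomial.monomial n a))
        = ι a * ((n : FractionRing (MvPolynomial (Fin 2) F)) * (Xv F 1) ^ (n - 1)) * ι f
          + ι (deltaRF a) * (Xv F 1) ^ n := by
      rw [Dop, Polynomial.derivative_monomial, Dc_monomial]
      simp only [map_add, map_mul, map_pow, jmap_monomial, jmap_C, jmap_X, map_natCast]
      ring
    rw [hR, jmap_monomial, Derivation.leibniz, Derivation.leibniz, Derivation.leibniz_pow,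
      Derivation.leibniz_pow, hd12, hd22, D_iota ι hιC hιX d1 1 hd11 a,
      D_iota ι hιC hιX d2 0 hd21 a]
    simp only [smul_eq_mul, nsmul_eq_mul, mul_zero, mul_one, add_zero, zero_add, smul_zero]
    ring

include hιC hιX hd11 hd12 hd21 hd22 in
theorem Dop_mul (u v : Polynomial (RatFunc F)) :
    Dop f (u * v) = Dop f u * v + u * Dop f v := by
  apply jmap_injective ι hιC hιX
  have e1 := d_jmap ι hιC hιX d1 d2 hd11 hd12 hd21 hd22 f u
  have e2 := d_jmap ι hιC hιX d1 d2 hd11 hd12 hd21 hd22 f v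
  have e3 := d_jmap ι hιC hιX d1 d2 hd11 hd12 hd21 hd22 f (u * v)
  rw [← e3, map_mul, Derivation.leibniz, Derivation.leibniz, map_add, map_mul, map_mul,
    ← e1, ← e2]
  simp only [smul_eq_mul]
  ring

include hιC hιX hd11 hd12 hd21 hd22 in
theorem Dop_X : Dop f Polynomial.X = Polynomial.C f := by
  rw [Dop, Polynomial.derivative_X, one_mul, ← Polynomial.monomial_one_one_eq_X,
    Dc_monomial, deltaRF_one, map_zero, zero_mul, add_zero]

include hιC hιX hd11 hd12 hd21 hd22 in
theorem Dop_X_pow (k : ℕ) :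
    Dop f (Polynomial.X ^ (k + 1)) =
      ((k + 1 : ℕ) : Polynomial (RatFunc F)) * Polynomial.X ^ k * Polynomial.C f := by
  induction k with
  | zero => simpa using Dop_X ι hιC hιX d1 d2 hd11 hd12 hd21 hd22 f
  | succ n ih =>
    rw [pow_succ, Dop_mul ι hιC hιX d1 d2 hd11 hd12 hd21 hd22 f,
      ih, Dop_X ι hιC hιX d1 d2 hd11 hd12 hd21 hd22 f]
    push_cast
    ring

end Main

end PoizatAux

open PoizatAux Polynomial in
/-- There is no `h ∈ F(x₁,x₂)` with `(∂h/∂x₁)·x₂ + (∂h/∂x₂)·x₂·f(x₁) = 1`,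
unless `f` is constant. Here `ι` is the embedding of `F(x)` into `F(x₁,x₂)`
sending `x` to `x₁`. -/
theorem poizat_no_Ga_map_unless_f_constant
    (F : Type*) [Field F] [CharZero F]
    (d1 d2 : Derivation F (FractionRing (MvPolynomial (Fin 2) F))
      (FractionRing (MvPolynomial (Fin 2) F)))
    (hd11 : d1 (Xv F 0) = 1) (hd12 : d1 (Xv F 1) = 0)
    (hd21 : d2 (Xv F 0) = 0) (hd22 : d2 (Xv F 1) = 1)
    (ι : RatFunc F →+* FractionRing (MvPolynomial (Fin 2) F))
    (hιC : ∀ c : F, ι (RatFunc.C c) = algebraMap F _ c)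
    (hιX : ι RatFunc.X = Xv F 0)
    (f : RatFunc F)
    (hsol : ∃ h : FractionRing (MvPolynomial (Fin 2) F),
      d1 h * Xv F 1 + d2 h * (Xv F 1 * ι f) = 1) :
    ∃ c : F, f = RatFunc.C c := by
  classical
  obtain ⟨h, hs⟩ := hsol
  haveI : CharZero (RatFunc F) :=
    charZero_of_injective_algebraMap (algebraMap F (RatFunc F)).injective
  letI : NormalizedGCDMonoid (Polynomial (RatFunc F)) := Classical.arbitrary _
  obtain ⟨P, Q, hQ, hPQ⟩ := IsFractionRing.div_surjective (A := MvPolynomial (Fin 2) F) h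
  set pt := ((thetar F P).map (algebraMap (Polynomial F) (RatFunc F))) with hptd
  set qt := ((thetar F Q).map (algebraMap (Polynomial F) (RatFunc F))) with hqtd
  have hjp : jmap ι pt = algebraMap _ _ P := jmap_thetar ι hιC hιX P
  have hjq : jmap ι qt = algebraMap _ _ Q := jmap_thetar ι hιC hιX Q
  have hjq0 : jmap ι qt ≠ 0 := by
    rw [hjq]
    exact IsFractionRing.to_map_ne_zero_of_mem_nonZeroDivisors hQ
  have hqt0 : qt ≠ 0 := fun h0 => hjq0 (by rw [h0, map_zero])
  have hgd1 : GCDMonoid.gcd pt qt ∣ pt := gcd_dvd_left _ _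
  have hgd2 : GCDMonoid.gcd pt qt ∣ qt := gcd_dvd_right _ _
  have hg0 : GCDMonoid.gcd pt qt ≠ 0 := fun h0 => hqt0 ((gcd_eq_zero_iff _ _).mp h0).2
  set g := GCDMonoid.gcd pt qt with hg
  set p1 := pt / g with hp1d
  set q1 := qt / g with hq1d
  have hco1 : IsCoprime p1 q1 := isCoprime_div_gcd_div_gcd hqt0
  have hp1 : g * p1 = pt := EuclideanDomain.mul_div_cancel' hg0 hgd1
  have hq1 : g * q1 = qt := EuclideanDomain.mul_div_cancel' hg0 hgd2
  have hq10 : q1 ≠ 0 := fun h0 => hqt0 (by rw [← hq1, h0, mul_zero])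
  set c := q1.leadingCoeff with hcdef
  have hc0 : c ≠ 0 := Polynomial.leadingCoeff_ne_zero.mpr hq10
  set p := p1 * Polynomial.C c⁻¹ with hpd
  set q := q1 * Polynomial.C c⁻¹ with hqd
  have hqmonic : q.Monic := Polynomial.monic_mul_leadingCoeff_inv hq10
  have hq0 : q ≠ 0 := hqmonic.ne_zero
  have hcu : IsUnit (Polynomial.C c⁻¹ : Polynomial (RatFunc F)) :=
    Polynomial.isUnit_C.mpr (isUnit_iff_ne_zero.mpr (inv_ne_zero hc0))
  have hco : IsCoprime p q := (isCoprime_mul_unit_right hcu _ _).mpr hco1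
  have hjq0' : jmap ι q ≠ 0 := fun h0 => hq0 (jmap_injective ι hιC hιX (by rw [h0, map_zero]))
  have hjg0 : jmap ι g ≠ 0 := fun h0 => hg0 (jmap_injective ι hιC hιX (by rw [h0, map_zero]))
  have hιc0 : ι c⁻¹ ≠ 0 := fun h0 => (inv_ne_zero hc0) (ι.injective (by rw [h0, map_zero]))
  have hh : h = jmap ι p / jmap ι q := by
    rw [← hPQ, ← hjp, ← hjq, ← hp1, ← hq1, hpd, hqd]
    rw [map_mul, map_mul, map_mul, map_mul, jmap_C]
    rw [mul_div_mul_left _ _ hjg0, mul_div_mul_right _ _ hιc0]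
  rw [hh] at hs
  clear_value g p1 q1 c p q pt qt
  have hB : Polynomial.X * (Dop f p * q - p * Dop f q) = q ^ 2 := by
    apply jmap_injective ι hιC hιX
    have e1 := d_jmap ι hιC hιX d1 d2 hd11 hd12 hd21 hd22 f p
    have e2 := d_jmap ι hιC hιX d1 d2 hd11 hd12 hd21 hd22 f q
    rw [Derivation.leibniz_div, Derivation.leibniz_div] at hs
    simp only [smul_eq_mul] at hs
    rw [map_mul, map_sub, map_mul, map_mul, map_pow, jmap_X, ← e1, ← e2]
    field_simp at hs
    linear_combination hs
  clear hs hh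
  by_cases hXq : Polynomial.X ∣ q
  · -- x₂ divides the denominator: conclude f = 0
    obtain ⟨r, hqr, hnd⟩ := q.exists_eq_pow_rootMultiplicity_mul_and_not_dvd hq0 0
    rw [map_zero, sub_zero] at hqr hnd
    have hm0 : q.rootMultiplicity 0 ≠ 0 := by
      intro h0
      rw [h0, pow_zero, one_mul] at hqr
      exact hnd (hqr ▸ hXq)
    obtain ⟨k, hk⟩ := Nat.exists_eq_succ_of_ne_zero hm0
    rw [hk, Nat.succ_eq_add_one] at hqr
    have hr0 : r ≠ 0 := by intro h0; rw [h0, mul_zero] at hqr; exact hq0 hqr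
    have hre : r.eval 0 ≠ 0 := by
      rw [← Polynomial.coeff_zero_eq_eval_zero]
      exact fun h0 => hnd (Polynomial.X_dvd_iff.mpr h0)
    have hpe : p.eval 0 ≠ 0 := by
      rw [← Polynomial.coeff_zero_eq_eval_zero]
      intro h0
      exact Polynomial.not_isUnit_X (hco.isUnit_of_dvd' (Polynomial.X_dvd_iff.mpr h0) hXq)
    have hDq : Dop f q = ((k + 1 : ℕ) : Polynomial (RatFunc F)) * Polynomial.X ^ k
          * Polynomial.C f * r + Polynomial.X ^ (k + 1) * Dop f r := by
      rw [hqr, Dop_mul ι hιC hιX d1 d2 hd11 hd12 hd21 hd22 f,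
        Dop_X_pow ι hιC hιX d1 d2 hd11 hd12 hd21 hd22 f]
    rw [hDq, hqr] at hB
    have hcancel : Polynomial.X ^ (k + 1) * (Polynomial.X * Dop f p * r
          - (((k + 1 : ℕ) : Polynomial (RatFunc F)) * Polynomial.C f * p * r
            + Polynomial.X * p * Dop f r))
        = Polynomial.X ^ (k + 1) * (Polynomial.X ^ (k + 1) * r ^ 2) := by
      linear_combination hB
    have hE := mul_left_cancel₀ (pow_ne_zero (k + 1) Polynomial.X_ne_zero) hcancel
    have hev := congrArg (Polynomial.eval 0) hE
    simp only [Polynomial.eval_mul, Polynomial.eval_sub, Polynomial.eval_add,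
      Polynomial.eval_pow, Polynomial.eval_X, Polynomial.eval_C, Polynomial.eval_natCast,
      zero_mul, mul_zero, zero_pow (by omega : k + 1 ≠ 0), zero_sub, neg_eq_zero,
      zero_add, add_zero] at hev
    have hk0 : ((k + 1 : ℕ) : RatFunc F) ≠ 0 := Nat.cast_ne_zero.mpr (by omega)
    refine ⟨0, ?_⟩
    rw [map_zero]
    simp only [mul_eq_zero] at hev
    rcases hev with ((hv | hv) | hv) | hv
    · exact absurd hv hk0
    · exact hv
    · exact absurd hv hpe
    · exact absurd hv hre
  · -- x₂ does not divide the denominator: contradiction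
    exfalso
    have hq00 : q.coeff 0 ≠ 0 := fun h0 => hXq (Polynomial.X_dvd_iff.mpr h0)
    have hdq : q ∣ Polynomial.X * Dop f q * p :=
      ⟨Polynomial.X * Dop f p - q, by linear_combination -hB⟩
    obtain ⟨w, hw⟩ := hco.symm.dvd_of_dvd_mul_right hdq
    by_cases hDq0 : Dop f q = 0
    · rw [hDq0] at hB
      have hXDp : Polynomial.X * Dop f p = q := by
        apply mul_right_cancel₀ hq0
        linear_combination hB
      have : q.coeff 0 = 0 := by
        have h0 := congrArg (fun u => Polynomial.coeff u 0) hXDp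
        simpa [Polynomial.mul_coeff_zero] using h0.symm
      exact hq00 this
    · have hw0 : w ≠ 0 := by
        intro h0; rw [h0, mul_zero] at hw
        rcases mul_eq_zero.mp hw with h' | h'
        · exact Polynomial.X_ne_zero h'
        · exact hDq0 h'
      have hnd : (Dop f q).natDegree < q.natDegree :=
        Polynomial.natDegree_lt_natDegree hDq0 (Dop_degree_lt f q hqmonic)
      have hdeg := congrArg Polynomial.natDegree hw
      rw [Polynomial.natDegree_mul Polynomial.X_ne_zero hDq0,
        Polynomial.natDegree_mul hq0 hw0, Polynomial.natDegree_X] at hdeg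
      have hwdeg : w.natDegree = 0 := by omega
      obtain ⟨a, ha⟩ := Polynomial.natDegree_eq_zero.mp hwdeg
      have hprod : q.coeff 0 * a = 0 := by
        have h0 := congrArg (fun u => Polynomial.coeff u 0) hw
        simpa [← ha, Polynomial.mul_coeff_zero] using h0.symm
      rcases mul_eq_zero.mp hprod with h' | h'
      · exact hq00 h'
      · exact hw0 (by rw [← ha, h', map_zero])
end

section
/- Let F be a field of characteristic zero, μ ∈ F, N a nonzero integer, and suppose aₙ ∈ F(x₁) for n ≥ 0 satisfy the recurrences: x₁·a₀' = 0, and for all i ≥ 1, i·(μ + x₁)·aᵢ + x₁·aᵢ' + x₁·aᵢ₋₁' = 0. If a₀ ∈ F (constant) then aᵢ = 0 for all i ≥ 1, provided that for each i ≥ 1 the equation a'/a = −iμ/x₁ − i has no nonzero rational solution. -/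
/-- The inductive coefficient argument: if Laurent coefficients
`aᵢ ∈ F(x₁)` satisfy `x₁·a₀' = 0` and
`i(μ + x₁)aᵢ + x₁aᵢ' + x₁aᵢ₋₁' = 0` for `i ≥ 1`, with `a₀` constant, and for
each `i ≥ 1` the equation `a'/a = -iμ/x₁ - i` has no nonzero rational solution,
then `aᵢ = 0` for all `i ≥ 1`. -/
theorem laurent_coefficients_vanish
    (F : Type*) [Field F] [CharZero F]
    (d : Derivation F (RatFunc F) (RatFunc F)) (hd : d RatFunc.X = 1)
    (μ : F) (N : ℤ) (hN : N ≠ 0)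
    (a : ℕ → RatFunc F)
    (h0 : RatFunc.X * d (a 0) = 0)
    (hrec : ∀ i : ℕ, 1 ≤ i →
      (i : RatFunc F) * (RatFunc.C μ + RatFunc.X) * a i
        + RatFunc.X * d (a i) + RatFunc.X * d (a (i - 1)) = 0)
    (ha0 : ∃ c : F, a 0 = RatFunc.C c)
    (hno : ∀ i : ℕ, 1 ≤ i → ¬ ∃ b : RatFunc F, b ≠ 0 ∧
      d b / b = -(i : RatFunc F) * RatFunc.C μ / RatFunc.X - (i : RatFunc F)) :
    ∀ i : ℕ, 1 ≤ i → a i = 0 := by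
  have key : ∀ i : ℕ, d (a i) = 0 ∧ (1 ≤ i → a i = 0) := by
    intro i
    induction i with
    | zero =>
      obtain ⟨c, hc⟩ := ha0
      refine ⟨?_, by omega⟩
      rw [hc, ← RatFunc.algebraMap_eq_C, Derivation.map_algebraMap]
    | succ n ih =>
      have hr := hrec (n + 1) (by omega)
      simp only [Nat.add_sub_cancel] at hr
      rw [ih.1, mul_zero, add_zero] at hr
      have hX : (RatFunc.X : RatFunc F) ≠ 0 := RatFunc.X_ne_zero
      have han1 : a (n + 1) = 0 := by
        by_contra h
        apply hno (n + 1) (by omega)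
        refine ⟨a (n + 1), h, ?_⟩
        field_simp
        push_cast at hr ⊢
        linear_combination hr
      exact ⟨by rw [han1, map_zero], fun _ => han1⟩
  exact fun i hi => (key i).2 hi
end

section
/- Let F be an algebraically closed field of characteristic zero, let P = ∑_{i=0}^{n} cᵢxⁱ ∈ F[x] with cₙ ≠ 0, let m ∈ ℤ, λ a positive integer, μ ∈ F, and suppose f = P/x^m satisfies x·f' + (x + μ − λ)·f + λ·x^λ = 0. Then n = λ + m − 1 and the coefficients satisfy (i + μ − λ − m)·cᵢ + cᵢ₋₁ = 0 for all i ≠ λ + m (with c₋₁ = c_{n+1} = 0), and consequently μ = m + λ − i for some i ∈ {0,…,n}. -/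
open Polynomial

lemma d_algebraMap_poly (F : Type*) [Field F]
    (d : Derivation F (RatFunc F) (RatFunc F)) (hd : d RatFunc.X = 1)
    (p : Polynomial F) :
    d (algebraMap (Polynomial F) (RatFunc F) p)
      = algebraMap (Polynomial F) (RatFunc F) (derivative p) := by
  induction p using Polynomial.induction_on' with
  | add p q hp hq => simp [hp, hq]
  | monomial n a =>
    rw [← smul_X_eq_monomial]
    have : algebraMap (Polynomial F) (RatFunc F) (a • (X : Polynomial F) ^ n)
        = a • (RatFunc.X) ^ n := by
      simp [Algebra.smul_def, map_pow, RatFunc.algebraMap_X]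
    rw [this, Derivation.map_smul, Derivation.leibniz_pow, hd, derivative_smul,
      derivative_X_pow]
    simp [Algebra.smul_def, map_pow, RatFunc.algebraMap_X, mul_comm]
    ring

/-- If `f = P/x^m` (with `P` a nonzero polynomial of degree `n`, `m ∈ ℤ`,
`λ` a positive integer, `μ ∈ F` algebraically closed of characteristic zero)
satisfies `x f' + (x + μ - λ) f + λ x^λ = 0`, then `n = λ + m - 1`, the
coefficients `cᵢ` of `P` satisfy `(i + μ - λ - m)cᵢ + cᵢ₋₁ = 0` for `i ≠ λ + m`
(with `c₋₁ = 0`), and consequently `μ = m + λ - i` for some `i ∈ {0,…,n}`. -/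
theorem coefficient_recurrence_of_solution
    (F : Type*) [Field F] [CharZero F] [IsAlgClosed F]
    (d : Derivation F (RatFunc F) (RatFunc F)) (hd : d RatFunc.X = 1)
    (P : Polynomial F) (hP : P ≠ 0) (m : ℤ) (l : ℕ) (hl : 0 < l) (μ : F)
    (f : RatFunc F)
    (hf : f = algebraMap (Polynomial F) (RatFunc F) P / RatFunc.X ^ m)
    (heq : RatFunc.X * d f + (RatFunc.X + RatFunc.C μ - (l : RatFunc F)) * f
        + (l : RatFunc F) * RatFunc.X ^ l = 0) :
    (P.natDegree : ℤ) = l + m - 1 ∧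
    (∀ i : ℕ, (i : ℤ) ≠ (l : ℤ) + m →
      ((i : F) + μ - (l : F) - (m : F)) * P.coeff i
        + (if i = 0 then 0 else P.coeff (i - 1)) = 0) ∧
    ∃ i : ℕ, i ≤ P.natDegree ∧ μ = (m : F) + (l : F) - (i : F) := by
  set A := algebraMap (Polynomial F) (RatFunc F) with hA
  have hX : (RatFunc.X : RatFunc F) ≠ 0 := RatFunc.X_ne_zero
  have hdf : d f = A (derivative P) * RatFunc.X ^ (-m)
      + (-(m : ℤ) : RatFunc F) * A P * RatFunc.X ^ (-m - 1) := by
    rw [hf, div_eq_mul_inv, ← zpow_neg, Derivation.leibniz,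
      Derivation.leibniz_zpow, hd, d_algebraMap_poly F d hd]
    simp only [smul_eq_mul, zsmul_eq_mul, smul_smul]
    push_cast
    ring
  have h2 : (RatFunc.X : RatFunc F) ^ (-m) * RatFunc.X ^ m = 1 := by
    rw [← zpow_add₀ hX]; simp
  have h3 : (RatFunc.X : RatFunc F) ^ (-m - 1) * RatFunc.X ^ m = RatFunc.X⁻¹ := by
    rw [← zpow_add₀ hX, show -m - 1 + m = -1 by ring, zpow_neg_one]
  have h4 : (RatFunc.X : RatFunc F) * RatFunc.X⁻¹ = 1 := mul_inv_cancel₀ hX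
  have h5 : (RatFunc.X : RatFunc F) ^ (l : ℕ) * RatFunc.X ^ m
      = RatFunc.X ^ ((l : ℤ) + m) := by
    rw [show ((RatFunc.X : RatFunc F) ^ (l : ℕ)) = RatFunc.X ^ ((l : ℕ) : ℤ) from
      (zpow_natCast _ _).symm, ← zpow_add₀ hX]
  have key : RatFunc.X * A (derivative P)
      + (RatFunc.X + RatFunc.C μ - (l : RatFunc F) - ((m : ℤ) : RatFunc F)) * A P
      + (l : RatFunc F) * RatFunc.X ^ ((l : ℤ) + m) = 0 := by
    rw [hdf, hf, div_eq_mul_inv, ← zpow_neg] at heq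
    linear_combination (RatFunc.X ^ m) * heq
      - (RatFunc.X * A (derivative P)
          + (RatFunc.X + RatFunc.C μ - (l : RatFunc F)) * A P) * h2
      - (-(m : ℤ) : RatFunc F) * A P * RatFunc.X * h3
      - (-(m : ℤ) : RatFunc F) * A P * h4
      - (l : RatFunc F) * h5
  rw [hA] at key
  set c : F := μ - (l : F) - (m : F) with hc
  have hcC : RatFunc.C c = RatFunc.C μ - (l : RatFunc F) - ((m : ℤ) : RatFunc F) := by
    rw [hc, map_sub, map_sub, map_natCast, map_intCast]
  have keyA : algebraMap (Polynomial F) (RatFunc F) (Polynomial.X * derivative P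
      + (Polynomial.X + Polynomial.C c) * P)
      = -((l : RatFunc F) * RatFunc.X ^ ((l : ℤ) + m)) := by
    simp only [map_add, map_mul, RatFunc.algebraMap_X, RatFunc.algebraMap_C, hcC]
    linear_combination key
  have hlm : 0 ≤ (l : ℤ) + m := by
    by_contra hneg
    push_neg at hneg
    set k : ℕ := (-((l : ℤ) + m)).toNat with hk
    have hk1 : ((k : ℕ) : ℤ) = -((l : ℤ) + m) := Int.toNat_of_nonneg (by omega)
    have hkpos : 0 < k := by omega
    have h6 : RatFunc.X ^ ((l : ℤ) + m) * (RatFunc.X : RatFunc F) ^ (k : ℕ) = 1 := by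
      rw [show ((RatFunc.X : RatFunc F) ^ (k : ℕ)) = RatFunc.X ^ ((k : ℕ) : ℤ) from
        (zpow_natCast _ _).symm, ← zpow_add₀ hX,
        show (l : ℤ) + m + ((k : ℕ) : ℤ) = 0 by omega, zpow_zero]
    have key2 : algebraMap (Polynomial F) (RatFunc F) ((Polynomial.X * derivative P
        + (Polynomial.X + Polynomial.C c) * P) * Polynomial.X ^ k
        + Polynomial.C ((l : F))) = 0 := by
      rw [map_add, map_mul, keyA, map_pow, RatFunc.algebraMap_X, RatFunc.algebraMap_C,
        map_natCast]
      linear_combination -(l : RatFunc F) * h6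
    have hzero := (map_eq_zero_iff _ (RatFunc.algebraMap_injective F)).mp key2
    have hev := congrArg (Polynomial.eval 0) hzero
    simp [zero_pow hkpos.ne', Nat.cast_eq_zero] at hev
    omega
  set N : ℕ := ((l : ℤ) + m).toNat with hNdef
  have hN : ((N : ℕ) : ℤ) = (l : ℤ) + m := Int.toNat_of_nonneg hlm
  have hQ : Polynomial.X * derivative P + Polynomial.X * P + Polynomial.C c * P
      + Polynomial.C ((l : F)) * Polynomial.X ^ N = 0 := by
    apply RatFunc.algebraMap_injective F
    rw [map_zero]
    simp only [map_add, map_mul, map_pow, RatFunc.algebraMap_X, RatFunc.algebraMap_C,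
      map_natCast]
    rw [show ((RatFunc.X : RatFunc F) ^ (N : ℕ)) = RatFunc.X ^ ((l : ℤ) + m) from by
      rw [show ((RatFunc.X : RatFunc F) ^ (N : ℕ)) = RatFunc.X ^ ((N : ℕ) : ℤ) from
        (zpow_natCast _ _).symm, hN]]
    simp only [map_add, map_mul, RatFunc.algebraMap_X, RatFunc.algebraMap_C] at keyA
    linear_combination keyA
  have hcoeff : ∀ i : ℕ, ((i : F) + c) * P.coeff i
      + (if i = 0 then 0 else P.coeff (i - 1))
      + (if i = N then (l : F) else 0) = 0 := by
    intro i
    have h := congrArg (fun p => Polynomial.coeff p i) hQ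
    simp only [Polynomial.coeff_add, Polynomial.coeff_zero, Polynomial.coeff_C_mul,
      Polynomial.coeff_X_pow] at h
    cases i with
    | zero =>
      simp only [Polynomial.mul_coeff_zero, Polynomial.coeff_X_zero, zero_mul] at h
      rw [if_pos rfl]
      by_cases h0 : (0 : ℕ) = N
      · rw [if_pos h0]
        rw [if_pos h0] at h
        push_cast at h ⊢
        linear_combination h
      · rw [if_neg h0]
        rw [if_neg h0] at h
        push_cast at h ⊢
        linear_combination h
    | succ j =>
      simp only [Polynomial.coeff_X_mul, Polynomial.coeff_derivative] at h
      rw [if_neg (Nat.succ_ne_zero j), Nat.add_sub_cancel]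
      by_cases h0 : j + 1 = N
      · rw [if_pos h0]
        rw [if_pos h0] at h
        push_cast at h ⊢
        linear_combination h
      · rw [if_neg h0]
        rw [if_neg h0] at h
        push_cast at h ⊢
        linear_combination h
  have hNn : N = P.natDegree + 1 := by
    by_contra hne
    have h := hcoeff (P.natDegree + 1)
    rw [Polynomial.coeff_natDegree_succ_eq_zero, if_neg (Nat.succ_ne_zero _),
      if_neg (fun hh => hne hh.symm), mul_zero, Nat.add_sub_cancel, zero_add,
      add_zero] at h
    exact hP (Polynomial.leadingCoeff_eq_zero.mp h)
  refine ⟨by omega, ?_, ?_⟩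
  · intro i hi
    have hiN : i ≠ N := fun hh => hi (by rw [hh]; exact hN)
    have h := hcoeff i
    rw [if_neg hiN, add_zero, hc] at h
    linear_combination h
  · by_contra hcon
    push_neg at hcon
    have hz : ∀ i, i ≤ P.natDegree → P.coeff i = 0 := by
      intro i
      induction i with
      | zero =>
        intro _
        have h := hcoeff 0
        rw [if_pos rfl, if_neg (by omega : (0 : ℕ) ≠ N), add_zero, add_zero] at h
        have hne : ((0 : ℕ) : F) + c ≠ 0 := by
          intro hc0
          rw [hc] at hc0
          exact hcon 0 (Nat.zero_le _) (by push_cast at hc0 ⊢; linear_combination hc0)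
        exact (mul_eq_zero.mp h).resolve_left hne
      | succ j ih =>
        intro hle
        have h := hcoeff (j + 1)
        rw [if_neg (Nat.succ_ne_zero j), if_neg (by omega : j + 1 ≠ N),
          Nat.add_sub_cancel, ih (by omega), add_zero, add_zero] at h
        have hne : ((j + 1 : ℕ) : F) + c ≠ 0 := by
          intro hc0
          rw [hc] at hc0
          exact hcon (j + 1) hle (by push_cast at hc0 ⊢; linear_combination hc0)
        exact (mul_eq_zero.mp h).resolve_left hne
    exact hP (Polynomial.leadingCoeff_eq_zero.mp (hz P.natDegree le_rfl))
end
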